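/- arXiv:1712.04683 — 3 statements merged into one kernel-verified Lean document; each statement's English description precedes it below -/
import Mathlib

section
/- Let w : A_t → ℝ^m be a harmonic map on the closed annulus A_t = {1 ≤ |z| ≤ t}, smooth up to the boundary, such that ∂_r w · ∂_θ w = 0 on both boundary circles. Define H(z) := ∂_z w · ∂_z w (the Hopf differential coefficient). Then z² H(z) is a real constant c on A_t, and −4c = |∂_θ w(re^{iθ})|² − r² |∂_r w(re^{iθ})|² at every point. In particular, w is weakly conformal if and only if c = 0. -/
open MeasureTheory

/-- Second directional derivative of `f : ℂ → E` at `z` in direction `v`. -/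
noncomputable def dir2 {E : Type*} [NormedAddCommGroup E] [NormedSpace ℝ E]
    (f : ℂ → E) (v : ℂ) (z : ℂ) : E :=
  deriv (fun s : ℝ => deriv (fun r : ℝ => f (z + r • v)) s) 0

/-- The flat Laplacian `Δf = ∂²f/∂x² + ∂²f/∂y²` of `f : ℂ → E`. -/
noncomputable def lap2 {E : Type*} [NormedAddCommGroup E] [NormedSpace ℝ E]
    (f : ℂ → E) (z : ℂ) : E :=
  dir2 f 1 z + dir2 f Complex.I z

/-- The Hopf differential coefficient
`H(z) = ∂_z w · ∂_z w = ¼(|∂_x w|² − |∂_y w|² − 2i ∂_x w · ∂_y w)`. -/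
noncomputable def hopfH {m : ℕ} (w : ℂ → EuclideanSpace ℝ (Fin m)) (z : ℂ) : ℂ :=
  (((‖fderiv ℝ w z 1‖ ^ 2 - ‖fderiv ℝ w z Complex.I‖ ^ 2 : ℝ) : ℂ) -
      2 * Complex.I *
        ((inner ℝ (fderiv ℝ w z 1) (fderiv ℝ w z Complex.I) : ℝ) : ℂ)) / 4

set_option maxHeartbeats 1000000

section AuxStmt10

open Complex


lemma dir2_eq_second {E : Type*} [NormedAddCommGroup E] [NormedSpace ℝ E]
    {f : ℂ → E} {U : Set ℂ} (hUo : IsOpen U) (hf : ContDiffOn ℝ (⊤ : ℕ∞) f U)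
    {z : ℂ} (hz : z ∈ U) (v : ℂ) :
    dir2 f v z = fderiv ℝ (fderiv ℝ f) z v v := by
  have hdiff : ∀ y ∈ U, HasFDerivAt f (fderiv ℝ f y) y := fun y hy =>
    ((hf.contDiffAt (hUo.mem_nhds hy)).differentiableAt (by simp)).hasFDerivAt
  have hf' : ContDiffOn ℝ (⊤ : ℕ∞) (fderiv ℝ f) U := hf.fderiv_of_isOpen hUo (by simp)
  have hD : HasFDerivAt (fderiv ℝ f) (fderiv ℝ (fderiv ℝ f) z) z :=
    ((hf'.contDiffAt (hUo.mem_nhds hz)).differentiableAt (by simp)).hasFDerivAt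
  have hcont : Continuous fun s : ℝ => z + s • v :=
    continuous_const.add (continuous_id.smul continuous_const)
  have hmem : ∀ᶠ s : ℝ in nhds 0, z + s • v ∈ U := by
    have h := hcont.continuousAt (x := (0:ℝ))
    have h0 : z + (0:ℝ) • v = z := by simp
    have := h.preimage_mem_nhds (by rw [h0]; exact hUo.mem_nhds hz)
    exact this
  have key : (fun s : ℝ => deriv (fun r : ℝ => f (z + r • v)) s)
      =ᶠ[nhds (0:ℝ)] fun s => fderiv ℝ f (z + s • v) v := by
    filter_upwards [hmem] with s hs
    have hc : HasDerivAt (fun r : ℝ => z + r • v) v s := by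
      simpa using ((hasDerivAt_id s).smul_const v).const_add z
    exact ((hdiff _ hs).comp_hasDerivAt s hc).deriv
  rw [dir2, key.deriv_eq]
  have hc0 : HasDerivAt (fun s : ℝ => z + s • v) v 0 := by
    simpa using ((hasDerivAt_id (0:ℝ)).smul_const v).const_add z
  have h0 : z + (0:ℝ) • v = z := by simp
  have h1 : HasDerivAt (fun s : ℝ => fderiv ℝ f (z + s • v))
      (fderiv ℝ (fderiv ℝ f) z v) 0 :=
    HasFDerivAt.comp_hasDerivAt 0 (h0.symm ▸ hD) hc0
  have h2 : HasDerivAt (fun s : ℝ => fderiv ℝ f (z + s • v) v)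
      (fderiv ℝ (fderiv ℝ f) z v v) 0 := by
    simpa [Function.comp_def] using
      (ContinuousLinearMap.apply ℝ E v).hasFDerivAt.comp_hasDerivAt 0 h1
  exact h2.deriv

lemma hopfH_diffC {m : ℕ} {w : ℂ → EuclideanSpace ℝ (Fin m)} {U : Set ℂ}
    (hUo : IsOpen U) (hsm : ContDiffOn ℝ (⊤ : ℕ∞) w U) {z : ℂ} (hz : z ∈ U)
    (hharm : fderiv ℝ (fderiv ℝ w) z 1 1 + fderiv ℝ (fderiv ℝ w) z Complex.I Complex.I = 0) :
    DifferentiableAt ℂ (hopfH w) z := by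
  have hE : True := trivial
  have hf' : ContDiffOn ℝ (⊤ : ℕ∞) (fderiv ℝ w) U := hsm.fderiv_of_isOpen hUo (by simp)
  set D := fderiv ℝ (fderiv ℝ w) z with hDdef
  have hD : HasFDerivAt (fderiv ℝ w) D z :=
    ((hf'.contDiffAt (hUo.mem_nhds hz)).differentiableAt (by simp)).hasFDerivAt
  have hsymm : D 1 Complex.I = D Complex.I 1 := by
    have hev : ∀ᶠ y in nhds z, HasFDerivAt w (fderiv ℝ w y) y := by
      filter_upwards [hUo.mem_nhds hz] with y hy
      exact ((hsm.contDiffAt (hUo.mem_nhds hy)).differentiableAt (by simp)).hasFDerivAt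
    exact second_derivative_symmetric_of_eventually hev hD 1 Complex.I
  have hIIeq : D Complex.I Complex.I = -(D 1 1) := by
    rw [eq_neg_iff_add_eq_zero, add_comm]; exact hharm
  have hp : HasFDerivAt (fun y => fderiv ℝ w y 1)
      ((ContinuousLinearMap.apply ℝ (EuclideanSpace ℝ (Fin m)) (1:ℂ)).comp D) z :=
    (ContinuousLinearMap.apply ℝ (EuclideanSpace ℝ (Fin m)) (1:ℂ)).hasFDerivAt.comp z hD
  have hq : HasFDerivAt (fun y => fderiv ℝ w y Complex.I)
      ((ContinuousLinearMap.apply ℝ (EuclideanSpace ℝ (Fin m)) (Complex.I)).comp D) z :=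
    (ContinuousLinearMap.apply ℝ (EuclideanSpace ℝ (Fin m)) (Complex.I)).hasFDerivAt.comp z hD
  have hα := hp.inner (𝕜 := ℝ) hp
  have hβ := hq.inner (𝕜 := ℝ) hq
  have hγ := hp.inner (𝕜 := ℝ) hq
  have h1 := Complex.ofRealCLM.hasFDerivAt.comp z (hα.sub hβ)
  have h2 := (Complex.ofRealCLM.hasFDerivAt.comp z hγ).const_mul (2 * Complex.I)
  have hbig := (h1.sub h2).const_mul (4⁻¹ : ℂ)
  have hH := hbig.congr_of_eventuallyEq (f₁ := hopfH w) ?heq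
  case heq =>
    refine Filter.Eventually.of_forall fun y => ?_
    simp only [hopfH, Pi.sub_apply, Function.comp_apply, Complex.ofRealCLM_apply,
      ← real_inner_self_eq_norm_sq]
    ring
  have hL : ∀ u : ℂ, fderiv ℝ (hopfH w) z u =
      ((((inner ℝ (fderiv ℝ w z 1) (D u 1) + inner ℝ (D u 1) (fderiv ℝ w z 1) : ℝ)
          - (inner ℝ (fderiv ℝ w z Complex.I) (D u Complex.I)
              + inner ℝ (D u Complex.I) (fderiv ℝ w z Complex.I) : ℝ) : ℝ) : ℂ)
        - 2 * Complex.I *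
          ((inner ℝ (fderiv ℝ w z 1) (D u Complex.I)
              + inner ℝ (D u 1) (fderiv ℝ w z Complex.I) : ℝ) : ℂ)) / 4 := by
    intro u
    rw [hH.fderiv]
    simp only [ContinuousLinearMap.smul_apply, ContinuousLinearMap.sub_apply,
      ContinuousLinearMap.comp_apply, ContinuousLinearMap.prod_apply, fderivInnerCLM_apply,
      ContinuousLinearMap.apply_apply, Complex.ofRealCLM_apply, smul_eq_mul]
    push_cast
    ring
  have hCR : fderiv ℝ (hopfH w) z Complex.I = Complex.I * fderiv ℝ (hopfH w) z 1 := by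
    rw [hL, hL, hsymm, hIIeq]
    simp only [inner_neg_left, inner_neg_right]
    rw [real_inner_comm ((D Complex.I) 1) (fderiv ℝ w z 1),
        real_inner_comm ((D 1) 1) (fderiv ℝ w z Complex.I),
        real_inner_comm ((D 1) 1) (fderiv ℝ w z 1),
        real_inner_comm ((D Complex.I) 1) (fderiv ℝ w z Complex.I)]
    set q1 : ℝ := inner ℝ (fderiv ℝ w z 1) ((D Complex.I) 1)
    set q2 : ℝ := inner ℝ (fderiv ℝ w z Complex.I) ((D 1) 1)
    set q3 : ℝ := inner ℝ (fderiv ℝ w z 1) ((D 1) 1)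
    set q4 : ℝ := inner ℝ (fderiv ℝ w z Complex.I) ((D Complex.I) 1)
    rw [Complex.ext_iff]
    push_cast
    constructor <;> simp [Complex.div_re, Complex.div_im, Complex.normSq] <;> try ring
  rw [differentiableAt_iff_restrictScalars ℝ hH.differentiableAt]
  refine ⟨(fderiv ℝ (hopfH w) z 1) • (1 : ℂ →L[ℂ] ℂ), ?_⟩
  apply ContinuousLinearMap.ext
  intro x
  have hx : x = x.re • (1:ℂ) + x.im • Complex.I := by
    simp [Complex.real_smul, Complex.re_add_im]
  calc ((fderiv ℝ (hopfH w) z 1 • (1 : ℂ →L[ℂ] ℂ)).restrictScalars ℝ) x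
      = fderiv ℝ (hopfH w) z 1 * x := by
        simp [ContinuousLinearMap.smul_apply, smul_eq_mul]
    _ = x.re • fderiv ℝ (hopfH w) z 1 + x.im • (Complex.I * fderiv ℝ (hopfH w) z 1) := by
        rw [Complex.real_smul, Complex.real_smul]
        nth_rewrite 1 [hx]
        rw [Complex.real_smul, Complex.real_smul]
        ring
    _ = fderiv ℝ (hopfH w) z x := by
        rw [← hCR]
        conv_rhs => rw [hx]
        rw [map_add, _root_.map_smul, _root_.map_smul]

lemma hopfH_re {m : ℕ} (w : ℂ → EuclideanSpace ℝ (Fin m)) (z : ℂ) :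
    (hopfH w z).re = (‖fderiv ℝ w z 1‖ ^ 2 - ‖fderiv ℝ w z Complex.I‖ ^ 2) / 4 := by
  set X : ℝ := ‖fderiv ℝ w z 1‖ ^ 2 - ‖fderiv ℝ w z Complex.I‖ ^ 2 with hX
  set Y : ℝ := inner ℝ (fderiv ℝ w z 1) (fderiv ℝ w z Complex.I) with hY
  rw [hopfH, ← hX, ← hY]
  simp [Complex.div_re, Complex.normSq]

lemma hopfH_im {m : ℕ} (w : ℂ → EuclideanSpace ℝ (Fin m)) (z : ℂ) :
    (hopfH w z).im = -(inner ℝ (fderiv ℝ w z 1) (fderiv ℝ w z Complex.I) : ℝ) / 2 := by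
  set X : ℝ := ‖fderiv ℝ w z 1‖ ^ 2 - ‖fderiv ℝ w z Complex.I‖ ^ 2 with hX
  set Y : ℝ := inner ℝ (fderiv ℝ w z 1) (fderiv ℝ w z Complex.I) with hY
  rw [hopfH, ← hX, ← hY]
  simp [Complex.div_im, Complex.normSq]
  ring

lemma fderiv_z_eq {m : ℕ} (w : ℂ → EuclideanSpace ℝ (Fin m)) (z : ℂ) :
    fderiv ℝ w z z = z.re • fderiv ℝ w z 1 + z.im • fderiv ℝ w z Complex.I := by
  have hz : (z.re • (1:ℂ) + z.im • Complex.I) = z := by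
    simp [Complex.real_smul, Complex.re_add_im]
  calc fderiv ℝ w z z = fderiv ℝ w z (z.re • (1:ℂ) + z.im • Complex.I) := by rw [hz]
    _ = _ := by rw [map_add, _root_.map_smul, _root_.map_smul]

lemma fderiv_iz_eq {m : ℕ} (w : ℂ → EuclideanSpace ℝ (Fin m)) (z : ℂ) :
    fderiv ℝ w z (Complex.I * z)
      = (-z.im) • fderiv ℝ w z 1 + z.re • fderiv ℝ w z Complex.I := by
  have hz : ((-z.im) • (1:ℂ) + z.re • Complex.I) = Complex.I * z := by
    simp [Complex.real_smul]
    rw [Complex.ext_iff]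
    simp
  calc fderiv ℝ w z (Complex.I * z)
      = fderiv ℝ w z ((-z.im) • (1:ℂ) + z.re • Complex.I) := by rw [hz]
    _ = _ := by rw [map_add, _root_.map_smul, _root_.map_smul]

lemma norm_comb_sq {E : Type*} [NormedAddCommGroup E] [InnerProductSpace ℝ E]
    (a b : E) (x y : ℝ) :
    ‖x • a + y • b‖ ^ 2
      = x ^ 2 * ‖a‖ ^ 2 + 2 * x * y * (inner ℝ a b : ℝ) + y ^ 2 * ‖b‖ ^ 2 := by
  rw [← real_inner_self_eq_norm_sq]
  simp only [inner_add_left, inner_add_right, real_inner_smul_left, real_inner_smul_right]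
  rw [real_inner_self_eq_norm_sq, real_inner_self_eq_norm_sq, real_inner_comm b a]
  ring

lemma inner_comb {E : Type*} [NormedAddCommGroup E] [InnerProductSpace ℝ E]
    (a b : E) (x y : ℝ) :
    (inner ℝ (x • a + y • b) ((-y) • a + x • b) : ℝ)
      = x * y * (‖b‖ ^ 2 - ‖a‖ ^ 2) + (x ^ 2 - y ^ 2) * (inner ℝ a b : ℝ) := by
  simp only [inner_add_left, inner_add_right, real_inner_smul_left, real_inner_smul_right]
  rw [real_inner_self_eq_norm_sq, real_inner_self_eq_norm_sq, real_inner_comm b a]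
  ring

lemma polar_re {m : ℕ} (w : ℂ → EuclideanSpace ℝ (Fin m)) (z : ℂ) :
    (z ^ 2 * hopfH w z).re
      = (‖fderiv ℝ w z z‖ ^ 2 - ‖fderiv ℝ w z (Complex.I * z)‖ ^ 2) / 4 := by
  rw [fderiv_z_eq, fderiv_iz_eq, norm_comb_sq, norm_comb_sq]
  rw [Complex.mul_re]
  rw [hopfH_re, hopfH_im]
  have h1 : (z ^ 2).re = z.re ^ 2 - z.im ^ 2 := by
    rw [sq]; rw [Complex.mul_re]; ring
  have h2 : (z ^ 2).im = 2 * z.re * z.im := by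
    rw [sq]; rw [Complex.mul_im]; ring
  rw [h1, h2]
  ring

lemma polar_im {m : ℕ} (w : ℂ → EuclideanSpace ℝ (Fin m)) (z : ℂ) :
    (z ^ 2 * hopfH w z).im
      = -(inner ℝ (fderiv ℝ w z z) (fderiv ℝ w z (Complex.I * z)) : ℝ) / 2 := by
  rw [fderiv_z_eq, fderiv_iz_eq, inner_comb]
  rw [Complex.mul_im]
  rw [hopfH_re, hopfH_im]
  have h1 : (z ^ 2).re = z.re ^ 2 - z.im ^ 2 := by
    rw [sq]; rw [Complex.mul_re]; ring
  have h2 : (z ^ 2).im = 2 * z.re * z.im := by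
    rw [sq]; rw [Complex.mul_im]; ring
  rw [h1, h2]
  ring

lemma annulusV_isOpen (t : ℝ) :
    IsOpen {z : ℂ | 1 < ‖z‖ ∧ ‖z‖ < t} := by
  have : {z : ℂ | 1 < ‖z‖ ∧ ‖z‖ < t}
      = {z : ℂ | 1 < ‖z‖} ∩ {z : ℂ | ‖z‖ < t} := rfl
  rw [this]
  exact (isOpen_lt continuous_const continuous_norm).inter
    (isOpen_lt continuous_norm continuous_const)

lemma annulusV_eq_image (t : ℝ) :
    {z : ℂ | 1 < ‖z‖ ∧ ‖z‖ < t}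
      = (fun p : ℝ × ℝ => (p.1 : ℂ) * Complex.exp (p.2 * Complex.I)) ''
          (Set.Ioo 1 t ×ˢ Set.univ) := by
  ext z
  constructor
  · rintro ⟨h1, h2⟩
    exact ⟨(‖z‖, Complex.arg z), ⟨⟨h1, h2⟩, trivial⟩,
      Complex.norm_mul_exp_arg_mul_I z⟩
  · rintro ⟨⟨r, θ⟩, ⟨⟨hr1, hr2⟩, -⟩, rfl⟩
    have habs : ‖(r : ℂ) * Complex.exp (θ * Complex.I)‖ = r := by
      rw [norm_mul, Complex.norm_exp]
      simp [Complex.norm_real, abs_of_pos (lt_trans one_pos hr1)]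
    rw [Set.mem_setOf_eq, habs]
    exact ⟨hr1, hr2⟩

lemma annulusV_preconnected (t : ℝ) :
    IsPreconnected {z : ℂ | 1 < ‖z‖ ∧ ‖z‖ < t} := by
  rw [annulusV_eq_image t]
  apply IsPreconnected.image
  · exact (isPreconnected_Ioo.prod isPreconnected_univ)
  · apply Continuous.continuousOn
    continuity

lemma annulusA_closed (t : ℝ) :
    IsClosed {z : ℂ | 1 ≤ ‖z‖ ∧ ‖z‖ ≤ t} := by
  have : {z : ℂ | 1 ≤ ‖z‖ ∧ ‖z‖ ≤ t}
      = {z : ℂ | 1 ≤ ‖z‖} ∩ {z : ℂ | ‖z‖ ≤ t} := rfl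
  rw [this]
  exact (isClosed_le continuous_const continuous_norm).inter
    (isClosed_le continuous_norm continuous_const)

lemma annulusA_subset_closure {t : ℝ} (ht : 1 < t) :
    {z : ℂ | 1 ≤ ‖z‖ ∧ ‖z‖ ≤ t}
      ⊆ closure {z : ℂ | 1 < ‖z‖ ∧ ‖z‖ < t} := by
  rintro z ⟨hz1, hz2⟩
  set r0 : ℝ := (1 + t) / 2 with hr0
  have hr01 : 1 < r0 := by rw [hr0]; linarith
  have hr0t : r0 < t := by rw [hr0]; linarith
  set f : ℝ → ℂ := fun s => (((1 - s) * ‖z‖ + s * r0 : ℝ) : ℂ)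
      * Complex.exp (Complex.arg z * Complex.I) with hf
  have hf0 : f 0 = z := by
    rw [hf]; simp [Complex.norm_mul_exp_arg_mul_I z]
  have hcont : ContinuousAt f 0 := by
    apply Continuous.continuousAt
    rw [hf]; continuity
  have htend : Filter.Tendsto f (nhdsWithin 0 (Set.Ioi (0:ℝ))) (nhds z) := by
    rw [← hf0]
    exact hcont.continuousWithinAt.tendsto
  apply mem_closure_of_tendsto htend
  filter_upwards [Ioo_mem_nhdsGT_of_mem (Set.left_mem_Ico.mpr one_pos)] with s hs
  obtain ⟨hs0, hs1⟩ := hs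
  have hrad : (0:ℝ) < (1 - s) * ‖z‖ + s * r0 := by nlinarith
  have habs : ‖f s‖ = (1 - s) * ‖z‖ + s * r0 := by
    rw [hf]
    show ‖(((((1 - s) * ‖z‖ + s * r0) : ℝ) : ℂ)
        * Complex.exp (Complex.arg z * Complex.I))‖ = _
    rw [norm_mul, Complex.norm_exp]
    have h0 : ((Complex.ofReal (Complex.arg z)) * Complex.I).re = 0 := by simp
    rw [h0, Real.exp_zero, mul_one, Complex.norm_of_nonneg hrad.le]
  constructor
  · rw [habs]; nlinarith
  · rw [habs]; nlinarith


end AuxStmt10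

/-- For a harmonic map `w` on the closed annulus `A_t`, smooth up to the boundary, with
`∂_r w · ∂_θ w = 0` on both boundary circles, `z²H(z)` is a real constant `c`, with
`-4c = |∂_θ w|² − r²|∂_r w|²` everywhere; `w` is weakly conformal iff `c = 0`.
(Here `fderiv w z z = r ∂_r w` and `fderiv w z (iz) = ∂_θ w`.) -/
theorem stmt10 (m : ℕ) (t : ℝ) (ht : 1 < t)
    (w : ℂ → EuclideanSpace ℝ (Fin m)) (U : Set ℂ) (hUo : IsOpen U)
    (hAU : {z : ℂ | 1 ≤ ‖z‖ ∧ ‖z‖ ≤ t} ⊆ U)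
    (hsm : ContDiffOn ℝ (⊤ : ℕ∞) w U)
    (hharm : ∀ z : ℂ, 1 < ‖z‖ → ‖z‖ < t → lap2 w z = 0)
    (hbdry : ∀ z : ℂ, ‖z‖ = 1 ∨ ‖z‖ = t →
      (inner ℝ (fderiv ℝ w z z) (fderiv ℝ w z (Complex.I * z)) : ℝ) = 0) :
    ∃ c : ℝ,
      (∀ z : ℂ, 1 ≤ ‖z‖ → ‖z‖ ≤ t →
        z ^ 2 * hopfH w z = (c : ℂ) ∧
        -4 * c = ‖fderiv ℝ w z (Complex.I * z)‖ ^ 2 - ‖fderiv ℝ w z z‖ ^ 2) ∧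
      ((∀ z : ℂ, 1 ≤ ‖z‖ → ‖z‖ ≤ t →
          ‖fderiv ℝ w z 1‖ = ‖fderiv ℝ w z Complex.I‖ ∧
          (inner ℝ (fderiv ℝ w z 1) (fderiv ℝ w z Complex.I) : ℝ) = 0) ↔ c = 0) := by
  
  classical
  set V : Set ℂ := {z : ℂ | 1 < ‖z‖ ∧ ‖z‖ < t} with hVdef
  set A : Set ℂ := {z : ℂ | 1 ≤ ‖z‖ ∧ ‖z‖ ≤ t} with hAdef
  have hVA : V ⊆ A := fun z hz => ⟨hz.1.le, hz.2.le⟩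
  have hVU : V ⊆ U := fun z hz => hAU (hVA hz)
  have hVo : IsOpen V := annulusV_isOpen t
  have hclosure : closure V = A := by
    apply subset_antisymm
    · exact closure_minimal hVA (annulusA_closed t)
    · exact annulusA_subset_closure ht
  -- the function g
  set gg : ℂ → ℂ := fun z => z ^ 2 * hopfH w z with hgg
  -- complex differentiability on V
  have hdiffC : ∀ z ∈ V, DifferentiableAt ℂ (hopfH w) z := by
    intro z hz
    apply hopfH_diffC hUo hsm (hVU hz)
    have h0 : lap2 w z = 0 := hharm z hz.1 hz.2
    rw [lap2, dir2_eq_second hUo hsm (hVU hz), dir2_eq_second hUo hsm (hVU hz)] at h0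
    exact h0
  have hdg : DifferentiableOn ℂ gg V := fun z hz =>
    (((differentiable_pow 2) z).mul (hdiffC z hz)).differentiableWithinAt
  -- continuity on U
  have hfc : ContinuousOn (fderiv ℝ w) U :=
    (ContDiffOn.fderiv_of_isOpen (m := (⊤ : ℕ∞)) hsm hUo (by simp)).continuousOn
  have h1c : ContinuousOn (fun y => fderiv ℝ w y 1) U :=
    (ContinuousLinearMap.apply ℝ (EuclideanSpace ℝ (Fin m)) (1:ℂ)).continuous.comp_continuousOn hfc
  have h2c : ContinuousOn (fun y => fderiv ℝ w y Complex.I) U :=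
    (ContinuousLinearMap.apply ℝ (EuclideanSpace ℝ (Fin m)) (Complex.I)).continuous.comp_continuousOn hfc
  have hHc : ContinuousOn (hopfH w) U := by
    have e1 : ContinuousOn (fun y => ((‖fderiv ℝ w y 1‖ ^ 2 - ‖fderiv ℝ w y Complex.I‖ ^ 2 : ℝ) : ℂ)) U :=
      Complex.continuous_ofReal.comp_continuousOn ((h1c.norm.pow 2).sub (h2c.norm.pow 2))
    have e2 : ContinuousOn (fun y => ((inner ℝ (fderiv ℝ w y 1) (fderiv ℝ w y Complex.I) : ℝ) : ℂ)) U :=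
      Complex.continuous_ofReal.comp_continuousOn (h1c.inner h2c)
    have : ContinuousOn (fun y => (((‖fderiv ℝ w y 1‖ ^ 2 - ‖fderiv ℝ w y Complex.I‖ ^ 2 : ℝ) : ℂ) -
        2 * Complex.I * ((inner ℝ (fderiv ℝ w y 1) (fderiv ℝ w y Complex.I) : ℝ) : ℂ)) / 4) U :=
      (e1.sub (continuousOn_const.mul e2)).div_const 4
    exact this
  have hggc : ContinuousOn gg U := (continuousOn_pow 2).mul hHc
  -- boundedness of V
  have hVb : Bornology.IsBounded V := by
    apply (Metric.isBounded_ball (x := (0:ℂ)) (r := t+1)).subset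
    intro z hz
    rw [Metric.mem_ball, dist_zero_right]
    linarith [hz.2]
  -- imaginary part vanishes on the frontier
  have hfr : ∀ y ∈ frontier V, (gg y).im = 0 := by
    intro y hy
    have hyA : y ∈ A := by
      rw [← hclosure]; exact hy.1
    have hynV : y ∉ V := by
      rw [frontier, hVo.interior_eq] at hy; exact hy.2
    have hcase : ‖y‖ = 1 ∨ ‖y‖ = t := by
      rcases hyA with ⟨hy1, hy2⟩
      by_contra hcon
      push_neg at hcon
      exact hynV ⟨lt_of_le_of_ne hy1 (Ne.symm hcon.1), lt_of_le_of_ne hy2 hcon.2⟩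
    have := hbdry y hcase
    rw [hgg, polar_im, this]
    norm_num
  -- maximum principle: imaginary part vanishes on closure V
  have hIm0 : ∀ z ∈ closure V, (gg z).im = 0 := by
    have hggcl : ContinuousOn gg (closure V) := hggc.mono (by rw [hclosure]; exact hAU)
    have hup : ∀ z ∈ closure V, (gg z).im ≤ 0 := by
      have hd : DiffContOnCl ℂ (fun y => Complex.exp (-Complex.I * gg y)) V :=
        ⟨((hdg.const_mul (-Complex.I)).cexp),
          Complex.continuous_exp.comp_continuousOn (continuousOn_const.mul hggcl)⟩
      have hbound : ∀ y ∈ frontier V, ‖Complex.exp (-Complex.I * gg y)‖ ≤ 1 := by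
        intro y hy
        rw [Complex.norm_exp]
        have : (-Complex.I * gg y).re = (gg y).im := by
          rw [Complex.mul_re]; simp
        rw [this, hfr y hy, Real.exp_zero]
      intro z hz
      have h2 := Complex.norm_le_of_forall_mem_frontier_norm_le hVb hd hbound hz
      rw [Complex.norm_exp] at h2
      have h3 : (-Complex.I * gg z).re = (gg z).im := by
        rw [Complex.mul_re]; simp
      rw [h3] at h2
      exact Real.exp_le_one_iff.mp h2
    have hdown : ∀ z ∈ closure V, 0 ≤ (gg z).im := by
      have hd : DiffContOnCl ℂ (fun y => Complex.exp (Complex.I * gg y)) V :=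
        ⟨((hdg.const_mul (Complex.I)).cexp),
          Complex.continuous_exp.comp_continuousOn (continuousOn_const.mul hggcl)⟩
      have hbound : ∀ y ∈ frontier V, ‖Complex.exp (Complex.I * gg y)‖ ≤ 1 := by
        intro y hy
        rw [Complex.norm_exp]
        have : (Complex.I * gg y).re = -(gg y).im := by
          rw [Complex.mul_re]; simp
        rw [this, hfr y hy, neg_zero, Real.exp_zero]
      intro z hz
      have h2 := Complex.norm_le_of_forall_mem_frontier_norm_le hVb hd hbound hz
      rw [Complex.norm_exp] at h2
      have h3 : (Complex.I * gg z).re = -(gg z).im := by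
        rw [Complex.mul_re]; simp
      rw [h3] at h2
      have := Real.exp_le_one_iff.mp h2
      linarith
    exact fun z hz => le_antisymm (hup z hz) (hdown z hz)
  -- gg is constant on V by the open mapping theorem
  have hanal : AnalyticOnNhd ℂ gg V := hdg.analyticOnNhd hVo
  have hz0V : (((1 + t) / 2 : ℝ) : ℂ) ∈ V := by
    constructor
    · rw [Complex.norm_real, Real.norm_eq_abs, abs_of_pos (by linarith)]
      · show (1:ℝ) < (1 + t)/2
        linarith
    · rw [Complex.norm_real, Real.norm_eq_abs, abs_of_pos (by linarith)]
      linarith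
  obtain ⟨k, hk⟩ : ∃ k, ∀ z ∈ V, gg z = k := by
    rcases hanal.is_constant_or_isOpen (annulusV_preconnected t) with ⟨k, hk⟩ | hopen
    · exact ⟨k, hk⟩
    · exfalso
      have himg : IsOpen (gg '' V) := hopen V subset_rfl hVo
      have hmem : gg (((1 + t) / 2 : ℝ) : ℂ) ∈ gg '' V := ⟨_, hz0V, rfl⟩
      rw [Metric.isOpen_iff] at himg
      obtain ⟨ε, hε, hball⟩ := himg _ hmem
      have hpt : gg (((1 + t) / 2 : ℝ) : ℂ) + ((ε/2 : ℝ) : ℂ) * Complex.I ∈ gg '' V := by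
        apply hball
        rw [Metric.mem_ball, dist_eq_norm]
        have : gg (((1 + t) / 2 : ℝ) : ℂ) + ((ε/2 : ℝ) : ℂ) * Complex.I
            - gg (((1 + t) / 2 : ℝ) : ℂ) = ((ε/2 : ℝ) : ℂ) * Complex.I := by ring
        rw [this, norm_mul, Complex.norm_I, Complex.norm_real, Real.norm_eq_abs, mul_one,
          abs_of_pos (by linarith)]
        linarith
      obtain ⟨y, hyV, hey⟩ := hpt
      have h1 : (gg y).im = 0 := hIm0 y (subset_closure hyV)
      have h2 : (gg (((1 + t) / 2 : ℝ) : ℂ)).im = 0 := hIm0 _ (subset_closure hz0V)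
      have him := congrArg Complex.im hey
      rw [h1, Complex.add_im, h2] at him
      have : (((ε/2 : ℝ) : ℂ) * Complex.I).im = ε/2 := by simp
      rw [this] at him
      linarith
  -- extend constancy to A by continuity
  have hkA : ∀ z ∈ A, gg z = k := by
    intro z hz
    have hzU : z ∈ U := hAU hz
    have hne : (nhdsWithin z V).NeBot :=
      mem_closure_iff_nhdsWithin_neBot.mp (by rw [hclosure]; exact hz)
    have h1 : Filter.Tendsto gg (nhdsWithin z V) (nhds (gg z)) :=
      (hggc.continuousAt (hUo.mem_nhds hzU)).continuousWithinAt
    have h2 : Filter.Tendsto gg (nhdsWithin z V) (nhds k) := by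
      apply Filter.Tendsto.congr' _ tendsto_const_nhds
      filter_upwards [self_mem_nhdsWithin] with y hy
      exact (hk y hy).symm
    exact tendsto_nhds_unique h1 h2
  -- k is real
  have hkim : k.im = 0 := by
    rw [← hk _ hz0V]
    exact hIm0 _ (subset_closure hz0V)
  refine ⟨k.re, ?_, ?_⟩
  · intro z hz1 hz2
    have hzA : z ∈ A := ⟨hz1, hz2⟩
    have hgz : gg z = (k.re : ℂ) := by
      rw [hkA z hzA]
      exact Complex.ext rfl (by simp [hkim])
    constructor
    · exact hgz
    · have hre := congrArg Complex.re hgz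
      rw [hgg] at hre
      rw [polar_re] at hre
      simp only [Complex.ofReal_re] at hre
      linarith
  · constructor
    · intro hconf
      have h1A : (1 : ℂ) ∈ A := by
        constructor <;> simp
        exact ht.le
      have hg1 : gg 1 = (k.re : ℂ) := by
        rw [hkA 1 h1A]
        exact Complex.ext rfl (by simp [hkim])
      obtain ⟨hn, hi⟩ := hconf 1 (by simp) (by simp [ht.le])
      have : (gg 1).re = 0 := by
        rw [hgg]
        simp only [one_pow, one_mul]
        rw [hopfH_re, hn]
        ring
      rw [hg1] at this
      simpa using this
    · intro hc0 z hz1 hz2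
      have hzA : z ∈ A := ⟨hz1, hz2⟩
      have hgz : gg z = (k.re : ℂ) := by
        rw [hkA z hzA]
        exact Complex.ext rfl (by simp [hkim])
      rw [hc0] at hgz
      have hzne : z ≠ 0 := by
        intro h
        rw [h] at hz1
        simp at hz1
        linarith
      have hH0 : hopfH w z = 0 := by
        rw [hgg] at hgz
        simp only [Complex.ofReal_zero] at hgz
        rcases mul_eq_zero.mp hgz with h | h
        · exact absurd ((pow_eq_zero_iff (by norm_num)).mp h) hzne
        · exact h
      have hre := congrArg Complex.re hH0
      have him := congrArg Complex.im hH0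
      rw [hopfH_re] at hre
      rw [hopfH_im] at him
      simp only [Complex.zero_re, Complex.zero_im] at hre him
      constructor
      · have hsq : ‖fderiv ℝ w z 1‖ ^ 2 = ‖fderiv ℝ w z Complex.I‖ ^ 2 := by linarith
        nlinarith [norm_nonneg (fderiv ℝ w z 1), norm_nonneg (fderiv ℝ w z Complex.I)]
      · linarith
end

section
/- Let w : 𝔻 → ℝ^m be harmonic and smooth up to the boundary, with ∂_r w · ∂_θ w = 0 on S^1. Then w is weakly conformal on 𝔻. -/
open MeasureTheory

open Metric Complex Filter

section auxlemmas
variable {E : Type*} [NormedAddCommGroup E] [NormedSpace ℝ E]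

lemma hasDerivAt_line' {f : ℂ → E} (z v : ℂ) {U : Set ℂ}
    (hf : ∀ u ∈ U, DifferentiableAt ℝ f u) {s : ℝ} (hs : z + s • v ∈ U) :
    HasDerivAt (fun r : ℝ => f (z + r • v)) (fderiv ℝ f (z + s • v) v) s := by
  have hline : HasDerivAt (fun r : ℝ => z + r • v) v s := by
    simpa using ((hasDerivAt_id s).smul_const v).const_add z
  exact (hf _ hs).hasFDerivAt.comp_hasDerivAt s hline

lemma dir2_eq_fderiv2 {f : ℂ → E} {U : Set ℂ} (hU : IsOpen U)
    (hf : ContDiffOn ℝ (⊤ : ℕ∞) f U) {z : ℂ} (hz : z ∈ U) (v : ℂ) :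
    dir2 f v z = fderiv ℝ (fderiv ℝ f) z v v := by
  have hCA : ∀ u ∈ U, ContDiffAt ℝ (⊤ : ℕ∞) f u := fun u hu => hf.contDiffAt (hU.mem_nhds hu)
  have hdiff : ∀ u ∈ U, DifferentiableAt ℝ f u := fun u hu =>
    (hCA u hu).differentiableAt (by simp)
  have hopen : IsOpen {s : ℝ | z + s • v ∈ U} := hU.preimage (by continuity)
  have h0 : (0 : ℝ) ∈ {s : ℝ | z + s • v ∈ U} := by simpa using hz
  have hev : (fun s : ℝ => deriv (fun r : ℝ => f (z + r • v)) s)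
      =ᶠ[nhds (0:ℝ)] fun s => fderiv ℝ f (z + s • v) v := by
    filter_upwards [hopen.mem_nhds h0] with s hs
    exact (hasDerivAt_line' z v hdiff hs).deriv
  have hg : DifferentiableAt ℝ (fderiv ℝ f) z :=
    ((hCA z hz).fderiv_right (m := 1) (by exact WithTop.coe_le_coe.mpr le_top)).differentiableAt
      one_ne_zero
  have hline : HasDerivAt (fun s : ℝ => z + s • v) v 0 := by
    simpa using ((hasDerivAt_id (0:ℝ)).smul_const v).const_add z
  have hg' : HasFDerivAt (fderiv ℝ f) (fderiv ℝ (fderiv ℝ f) z) (z + (0:ℝ) • v) := by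
    simpa using hg.hasFDerivAt
  have h1 : HasDerivAt (fun s : ℝ => fderiv ℝ f (z + s • v)) (fderiv ℝ (fderiv ℝ f) z v) 0 := by
    exact hg'.comp_hasDerivAt 0 hline
  have h2 : HasDerivAt (fun s : ℝ => fderiv ℝ f (z + s • v) v)
      (fderiv ℝ (fderiv ℝ f) z v v) 0 := by
    exact (ContinuousLinearMap.apply ℝ E v).hasFDerivAt.comp_hasDerivAt 0 h1
  rw [dir2, hev.deriv_eq]
  exact h2.deriv

lemma fderiv_clm_comp_apply' {w : ℂ → E} {F : Type*} [NormedAddCommGroup F] [NormedSpace ℝ F]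
    (L : E →L[ℝ] F) {z : ℂ} (hw : DifferentiableAt ℝ w z) (v : ℂ) :
    fderiv ℝ (fun y => L (w y)) z v = L (fderiv ℝ w z v) := by
  have h2 : HasFDerivAt (fun y => L (w y)) (L.comp (fderiv ℝ w z)) z :=
    L.hasFDerivAt.comp z hw.hasFDerivAt
  rw [h2.fderiv]
  rfl

lemma fderiv2_clm_comp {w : ℂ → E} {F : Type*} [NormedAddCommGroup F] [NormedSpace ℝ F]
    (L : E →L[ℝ] F) {U : Set ℂ} (hU : IsOpen U) (hw : ContDiffOn ℝ (⊤ : ℕ∞) w U)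
    {z : ℂ} (hz : z ∈ U) (v : ℂ) :
    fderiv ℝ (fderiv ℝ (fun y => L (w y))) z v v = L (fderiv ℝ (fderiv ℝ w) z v v) := by
  have hdiff : ∀ u ∈ U, DifferentiableAt ℝ w u := fun u hu =>
    (hw.contDiffAt (hU.mem_nhds hu)).differentiableAt (by simp)
  have hg : DifferentiableAt ℝ (fderiv ℝ w) z :=
    (((hw.contDiffAt (hU.mem_nhds hz)).fderiv_right (m := 1)
      (by exact WithTop.coe_le_coe.mpr le_top))).differentiableAt one_ne_zero
  have hev : fderiv ℝ (fun y => L (w y)) =ᶠ[nhds z]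
      fun y => (ContinuousLinearMap.compL ℝ ℂ E F L) (fderiv ℝ w y) := by
    filter_upwards [hU.mem_nhds hz] with y hy
    have h2 : HasFDerivAt (fun y => L (w y)) (L.comp (fderiv ℝ w y)) y :=
      L.hasFDerivAt.comp y (hdiff y hy).hasFDerivAt
    exact h2.fderiv
  have h2 : HasFDerivAt (fun y => (ContinuousLinearMap.compL ℝ ℂ E F L) (fderiv ℝ w y))
      ((ContinuousLinearMap.compL ℝ ℂ E F L).comp (fderiv ℝ (fderiv ℝ w) z)) z :=
    (ContinuousLinearMap.compL ℝ ℂ E F L).hasFDerivAt.comp z hg.hasFDerivAt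
  rw [hev.fderiv_eq, h2.fderiv]
  rfl

end auxlemmas

lemma holo_of_harmonic {u : ℂ → ℝ} {U : Set ℂ} (hU : IsOpen U)
    (hu : ContDiffOn ℝ (⊤ : ℕ∞) u U) {z : ℂ} (hz : z ∈ U)
    (hlap : fderiv ℝ (fderiv ℝ u) z 1 1 + fderiv ℝ (fderiv ℝ u) z I I = 0) :
    DifferentiableAt ℂ (fun y => (fderiv ℝ u y 1 : ℂ) - I * (fderiv ℝ u y I : ℝ)) z := by
  have hCA : ContDiffAt ℝ (⊤ : ℕ∞) u z := hu.contDiffAt (hU.mem_nhds hz)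
  have hg : DifferentiableAt ℝ (fderiv ℝ u) z :=
    (hCA.fderiv_right (m := 1) (by exact WithTop.coe_le_coe.mpr le_top)).differentiableAt one_ne_zero
  set Q := fderiv ℝ (fderiv ℝ u) z with hQdef
  have hsymm : Q I 1 = Q 1 I :=
    (hCA.isSymmSndFDerivAt (by simp [minSmoothness_of_isRCLikeNormedField]; exact WithTop.coe_le_coe.mpr (le_top : (2:ℕ∞) ≤ ⊤))) I 1
  have hQII : Q I I = -(Q 1 1) := by linarith [hlap]
  have h1 : HasFDerivAt (fun y => ((fderiv ℝ u y 1 : ℝ) : ℂ))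
      (Complex.ofRealCLM.comp ((ContinuousLinearMap.apply ℝ ℝ (1:ℂ)).comp Q)) z :=
    Complex.ofRealCLM.hasFDerivAt.comp z
      ((ContinuousLinearMap.apply ℝ ℝ (1:ℂ)).hasFDerivAt.comp z hg.hasFDerivAt)
  have h2 : HasFDerivAt (fun y => ((fderiv ℝ u y I : ℝ) : ℂ))
      (Complex.ofRealCLM.comp ((ContinuousLinearMap.apply ℝ ℝ (I:ℂ)).comp Q)) z :=
    Complex.ofRealCLM.hasFDerivAt.comp z
      ((ContinuousLinearMap.apply ℝ ℝ (I:ℂ)).hasFDerivAt.comp z hg.hasFDerivAt)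
  have hφ : HasFDerivAt (fun y => (fderiv ℝ u y 1 : ℂ) - I * (fderiv ℝ u y I : ℝ))
      (Complex.ofRealCLM.comp ((ContinuousLinearMap.apply ℝ ℝ (1:ℂ)).comp Q)
        - I • (Complex.ofRealCLM.comp ((ContinuousLinearMap.apply ℝ ℝ (I:ℂ)).comp Q))) z :=
    h1.sub (h2.const_mul I)
  set c : ℂ := ((Q 1 1 : ℝ) : ℂ) - I * ((Q 1 I : ℝ) : ℂ) with hc
  have hext : (ContinuousLinearMap.restrictScalars ℝ (c • (ContinuousLinearMap.id ℂ ℂ)))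
      = Complex.ofRealCLM.comp ((ContinuousLinearMap.apply ℝ ℝ (1:ℂ)).comp Q)
        - I • (Complex.ofRealCLM.comp ((ContinuousLinearMap.apply ℝ ℝ (I:ℂ)).comp Q)) := by
    apply ContinuousLinearMap.ext
    intro h
    have hh : h = h.re • (1:ℂ) + h.im • (I:ℂ) := by
      simpa [Complex.real_smul] using (Complex.re_add_im h).symm
    have hQh : Q h = h.re • Q 1 + h.im • Q I := by
      conv_lhs => rw [hh]
      simp only [map_add, _root_.map_smul]
    simp only [ContinuousLinearMap.coe_restrictScalars', ContinuousLinearMap.smul_apply,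
      ContinuousLinearMap.coe_id', id_eq, ContinuousLinearMap.sub_apply,
      ContinuousLinearMap.coe_comp', Function.comp_apply,
      ContinuousLinearMap.apply_apply, Complex.ofRealCLM_apply, smul_eq_mul]
    rw [hQh]
    simp only [ContinuousLinearMap.add_apply, ContinuousLinearMap.smul_apply, smul_eq_mul]
    rw [hsymm, hQII]
    have hre : ((h.re : ℝ) : ℂ) + ((h.im : ℝ) : ℂ) * I = h := Complex.re_add_im h
    push_cast
    linear_combination (-(c)) * hre + (-((Q 1 I : ℝ) : ℂ) * (h.im : ℂ)) * Complex.I_sq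
  exact (hasFDerivAt_of_restrictScalars ℝ hφ hext).differentiableAt

lemma eq_zero_of_limit {F : ℂ → ℂ} {s : Set ℂ} {z : ℂ} (hc : ContinuousAt F z)
    (hne : (nhdsWithin z s).NeBot) (h0 : ∀ y ∈ s, F y = 0) : F z = 0 := by
  have hev : F =ᶠ[nhdsWithin z s] fun _ => (0:ℂ) := by
    filter_upwards [self_mem_nhdsWithin] with y hy
    exact h0 y hy
  exact tendsto_nhds_unique hc.continuousWithinAt
    (Filter.Tendsto.congr' hev.symm tendsto_const_nhds)

/-- A harmonic map `w` on the closed unit disk, smooth up to the boundary, with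
`∂_r w · ∂_θ w = 0` on `S¹`, is weakly conformal on the disk:
`|∂_x w| = |∂_y w|` and `∂_x w · ∂_y w = 0` everywhere. -/
theorem stmt11 (m : ℕ) (w : ℂ → EuclideanSpace ℝ (Fin m)) (U : Set ℂ) (hUo : IsOpen U)
    (hDU : Metric.closedBall (0 : ℂ) 1 ⊆ U)
    (hsm : ContDiffOn ℝ (⊤ : ℕ∞) w U)
    (hharm : ∀ z ∈ Metric.ball (0 : ℂ) 1, lap2 w z = 0)
    (hbdry : ∀ z : ℂ, ‖z‖ = 1 →
      (inner ℝ (fderiv ℝ w z z) (fderiv ℝ w z (Complex.I * z)) : ℝ) = 0) :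
    ∀ z ∈ Metric.closedBall (0 : ℂ) 1,
      ‖fderiv ℝ w z 1‖ = ‖fderiv ℝ w z Complex.I‖ ∧
      (inner ℝ (fderiv ℝ w z 1) (fderiv ℝ w z Complex.I) : ℝ) = 0 := by
  classical
  have hsm' : ContDiffOn ℝ (⊤ : ℕ∞) w U := hsm.of_le (by simp)
  have hdiff : ∀ y ∈ U, DifferentiableAt ℝ w y := fun y hy =>
    (hsm'.contDiffAt (hUo.mem_nhds hy)).differentiableAt (by simp)
  set D : Set ℂ := Metric.ball (0:ℂ) 1 with hD
  have hDsub : D ⊆ U := fun y hy => hDU (ball_subset_closedBall hy)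
  set P : (Fin m) → (EuclideanSpace ℝ (Fin m) →L[ℝ] ℝ) :=
    fun k => EuclideanSpace.proj k with hP
  set F : ℂ → ℂ :=
    fun y => ∑ k : Fin m, ((fderiv ℝ w y 1 k : ℂ) - I * (fderiv ℝ w y I k : ℝ))^2 with hFdef
  -- F is holomorphic on the ball
  have hholo : ∀ x ∈ D, DifferentiableAt ℂ F x := by
    intro x hx
    have hxU : x ∈ U := hDsub hx
    have hgdiff : DifferentiableAt ℂ
        (fun y => ∑ k : Fin m, ((fderiv ℝ (fun t => P k (w t)) y 1 : ℂ)
            - I * (fderiv ℝ (fun t => P k (w t)) y I : ℝ))^2) x := by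
      apply DifferentiableAt.fun_sum
      intro k _
      apply DifferentiableAt.pow
      have hcd : ContDiffOn ℝ (⊤ : ℕ∞) (fun t => P k (w t)) U :=
        (P k).contDiff.comp_contDiffOn hsm'
      apply holo_of_harmonic hUo hcd hxU
      rw [fderiv2_clm_comp (P k) hUo hsm' hxU 1, fderiv2_clm_comp (P k) hUo hsm' hxU Complex.I,
        ← map_add, ← dir2_eq_fderiv2 hUo hsm' hxU 1, ← dir2_eq_fderiv2 hUo hsm' hxU Complex.I]
      have hlap : dir2 w 1 x + dir2 w Complex.I x = lap2 w x := rfl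
      rw [hlap, hharm x hx, map_zero]
    apply hgdiff.congr_of_eventuallyEq
    filter_upwards [hUo.mem_nhds hxU] with y hy
    rw [hFdef]
    apply Finset.sum_congr rfl
    intro k _
    rw [fderiv_clm_comp_apply' (P k) (hdiff y hy) 1,
      fderiv_clm_comp_apply' (P k) (hdiff y hy) Complex.I]
    simp [hP]
  -- F is continuous on U
  have hfdc : ContinuousOn (fderiv ℝ w) U := by
    have := hsm'.fderiv_of_isOpen hUo (m := 0) (by
      rw [zero_add]; exact_mod_cast le_top)
    exact this.continuousOn
  have hFcont : ContinuousOn F U := by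
    apply continuousOn_finset_sum
    intro k _
    have hc : ∀ v : ℂ, ContinuousOn (fun y => ((fderiv ℝ w y v k : ℝ) : ℂ)) U := by
      intro v
      exact Complex.continuous_ofReal.comp_continuousOn
        (((P k).continuous.comp
          (ContinuousLinearMap.apply ℝ (EuclideanSpace ℝ (Fin m)) v).continuous).comp_continuousOn
          hfdc)
    exact ((hc 1).sub (continuousOn_const.mul (hc Complex.I))).pow 2
  -- algebraic form of F
  have hinner : ∀ (x v : EuclideanSpace ℝ (Fin m)), (inner ℝ x v : ℝ) = ∑ k, x k * v k := by
    intro x v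
    simp [PiLp.inner_apply, RCLike.inner_apply, starRingEnd_apply]
    exact Finset.sum_congr rfl fun _ _ => mul_comm _ _
  have hFform : ∀ y : ℂ, F y
      = ((inner ℝ (fderiv ℝ w y 1) (fderiv ℝ w y 1) : ℝ) : ℂ)
        - ((inner ℝ (fderiv ℝ w y Complex.I) (fderiv ℝ w y Complex.I) : ℝ) : ℂ)
        - 2*I*((inner ℝ (fderiv ℝ w y 1) (fderiv ℝ w y Complex.I) : ℝ) : ℂ) := by
    intro y
    rw [hFdef, hinner, hinner, hinner]
    push_cast
    rw [← Finset.sum_sub_distrib, Finset.mul_sum, ← Finset.sum_sub_distrib]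
    apply Finset.sum_congr rfl
    intro k _
    linear_combination ((fderiv ℝ w y Complex.I k : ℂ))^2 * Complex.I_sq
  -- boundary vanishing of the imaginary part of z^2 F z
  have hzdec : ∀ (T : ℂ →L[ℝ] EuclideanSpace ℝ (Fin m)) (c : ℂ),
      T c = c.re • T 1 + c.im • T Complex.I := by
    intro T c
    have hh : c = c.re • (1:ℂ) + c.im • (I:ℂ) := by
      simpa [Complex.real_smul] using (Complex.re_add_im c).symm
    conv_lhs => rw [hh]
    simp only [map_add, _root_.map_smul]
  have hImbdry : ∀ y : ℂ, ‖y‖ = 1 → (y^2 * F y).im = 0 := by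
    intro y hy
    have hb := hbdry y hy
    rw [hzdec (fderiv ℝ w y) y, hzdec (fderiv ℝ w y) (Complex.I * y)] at hb
    have hIy : (Complex.I * y).re = -y.im := by simp
    have hIy' : (Complex.I * y).im = y.re := by simp
    rw [hIy, hIy'] at hb
    simp only [inner_add_left, inner_add_right, real_inner_smul_left, real_inner_smul_right] at hb
    have hcomm : (inner ℝ (fderiv ℝ w y Complex.I) (fderiv ℝ w y 1) : ℝ)
        = (inner ℝ (fderiv ℝ w y 1) (fderiv ℝ w y Complex.I) : ℝ) := real_inner_comm _ _
    have hre : (F y).re = (inner ℝ (fderiv ℝ w y 1) (fderiv ℝ w y 1) : ℝ)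
        - (inner ℝ (fderiv ℝ w y Complex.I) (fderiv ℝ w y Complex.I) : ℝ) := by
      rw [hFform y]; simp [← Complex.ofReal_pow]
    have him : (F y).im = -(2 * (inner ℝ (fderiv ℝ w y 1) (fderiv ℝ w y Complex.I) : ℝ)) := by
      rw [hFform y]; simp [← Complex.ofReal_pow]
    have hsq_re : (y^2).re = y.re*y.re - y.im*y.im := by simp [pow_two, Complex.mul_re]
    have hsq_im : (y^2).im = y.re*y.im + y.im*y.re := by simp [pow_two, Complex.mul_im]
    rw [Complex.mul_im, hre, him, hsq_re, hsq_im]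
    linear_combination (-2 : ℝ) * hb + (-2*y.im^2) * hcomm
  -- max principle: Im (z^2 F z) = 0 on the closed ball
  have hFD : DifferentiableOn ℂ F D := fun x hx => (hholo x hx).differentiableWithinAt
  have hGD : DifferentiableOn ℂ (fun y => y^2 * F y) D :=
    (differentiable_pow 2).differentiableOn.mul hFD
  have hGC : ContinuousOn (fun y => y^2 * F y) (Metric.closedBall (0:ℂ) 1) :=
    (continuous_pow 2).continuousOn.mul (hFcont.mono hDU)
  have hclos : closure D = Metric.closedBall (0:ℂ) 1 := by
    rw [hD]; exact closure_ball (0:ℂ) one_ne_zero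
  have hmax : ∀ x ∈ Metric.closedBall (0:ℂ) 1, (x^2 * F x).im = 0 := by
    intro x hx
    have hx' : x ∈ closure D := by rw [hclos]; exact hx
    have key : ∀ c : ℂ, c = I ∨ c = -I →
        ‖Complex.exp (c * (x^2 * F x))‖ ≤ 1 := by
      intro c hc
      have hdc : DiffContOnCl ℂ (fun y => Complex.exp (c * (y^2 * F y))) D := by
        refine ⟨(hGD.const_mul c).cexp, ?_⟩
        rw [hclos]
        exact Complex.continuous_exp.comp_continuousOn (continuousOn_const.mul hGC)
      have hbound : ∀ y ∈ frontier D, ‖Complex.exp (c * (y^2 * F y))‖ ≤ 1 := by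
        intro y hy
        have hy1 : ‖y‖ = 1 := by
          rw [hD, frontier_ball (0:ℂ) one_ne_zero] at hy
          simpa [Complex.dist_eq] using hy
        have him := hImbdry y hy1
        have hrec : (c * (y^2 * F y)).re = 0 := by
          rcases hc with rfl | rfl
          · rw [Complex.mul_re]; simp [him]
          · rw [Complex.mul_re]; simp [him]
        rw [Complex.norm_exp, hrec]
        simp
      exact Complex.norm_le_of_forall_mem_frontier_norm_le isBounded_ball hdc hbound hx'
    have h1 := key I (Or.inl rfl)
    have h2 := key (-I) (Or.inr rfl)
    rw [Complex.norm_exp] at h1 h2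
    have e1 : (I * (x^2 * F x)).re = -((x^2 * F x).im) := by
      rw [Complex.mul_re]; simp
    have e2 : ((-I) * (x^2 * F x)).re = (x^2 * F x).im := by
      rw [Complex.mul_re]; simp
    rw [e1] at h1
    rw [e2] at h2
    rw [Real.exp_le_one_iff] at h1 h2
    linarith
  -- the Hopf differential z^2 F z is constant (hence 0) on the ball
  have hG0 : ∀ x ∈ D, x^2 * F x = 0 := by
    have hfzero : ∀ x ∈ D, fderivWithin ℂ (fun y => y^2 * F y) D x = 0 := by
      intro x hx
      rw [hD] at hx ⊢
      rw [fderivWithin_of_isOpen isOpen_ball hx]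
      have hdx : DifferentiableAt ℂ (fun y => y^2 * F y) x :=
        (differentiableAt_pow 2).mul (hholo x (by rwa [hD]))
      have hder : HasDerivAt (fun y => y^2 * F y) (deriv (fun y => y^2 * F y) x) x :=
        hdx.hasDerivAt
      have hdirim : ∀ v : ℂ, (v * deriv (fun y => y^2 * F y) x).im = 0 := by
        intro v
        have hline : HasDerivAt (fun t : ℝ => x + t • v) v 0 := by
          simpa using ((hasDerivAt_id (0:ℝ)).smul_const v).const_add x
        have hder' : HasDerivAt (fun y => y^2 * F y)
            (deriv (fun y => y^2 * F y) x) (x + (0:ℝ) • v) := by simpa using hder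
        have hcomp : HasDerivAt (fun t : ℝ => (x + t • v)^2 * F (x + t • v))
            (v • deriv (fun y => y^2 * F y) x) 0 :=
          HasDerivAt.scomp 0 (g₁ := fun y => y^2 * F y) hder' hline
        have hcomp2 : HasDerivAt (fun t : ℝ => ((x + t • v)^2 * F (x + t • v)).im)
            (Complex.imCLM (v • deriv (fun y => y^2 * F y) x)) 0 := by
          exact Complex.imCLM.hasFDerivAt.comp_hasDerivAt 0 hcomp
        have hball : ∀ᶠ t : ℝ in nhds 0, ((x + t • v)^2 * F (x + t • v)).im = 0 := by
          have hop : IsOpen {t : ℝ | x + t • v ∈ Metric.ball (0:ℂ) 1} :=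
            isOpen_ball.preimage (continuous_const.add (continuous_id.smul continuous_const))
          filter_upwards [hop.mem_nhds (by simpa using hx)] with t ht
          exact hmax _ (ball_subset_closedBall ht)
        have hconst : HasDerivAt (fun _ : ℝ => (0:ℝ))
            (Complex.imCLM (v • deriv (fun y => y^2 * F y) x)) 0 := by
          apply hcomp2.congr_of_eventuallyEq
          filter_upwards [hball] with t ht
          exact ht.symm
        have := hconst.unique (hasDerivAt_const 0 0)
        rw [← this]
        simp [smul_eq_mul]
      have hc0 : deriv (fun y => y^2 * F y) x = 0 := by
        have e1 := hdirim 1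
        have e2 := hdirim I
        rw [one_mul] at e1
        have e2' : (deriv (fun y => y^2 * F y) x).re = 0 := by
          rw [Complex.mul_im] at e2
          simpa using e2
        exact Complex.ext e2' e1
      have hF0 : HasDerivAt (fun y => y^2 * F y) 0 x := hc0 ▸ hder
      have hFf := hasDerivAt_iff_hasFDerivAt.mp hF0
      rw [hFf.fderiv]
      ext t
      simp
    intro x hx
    have h00 : (0:ℂ) ∈ D := by rw [hD]; exact mem_ball_self one_pos
    have hcst := Convex.is_const_of_fderivWithin_eq_zero (𝕜 := ℂ)
      (by rw [hD]; exact convex_ball (0:ℂ) 1) hGD hfzero hx h00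
    rw [hcst, zero_pow (two_ne_zero), zero_mul]
  -- F vanishes on the closed ball
  have hFD0 : ∀ x ∈ D, F x = 0 := by
    intro x hx
    rcases eq_or_ne x 0 with rfl | hne
    · have hCA : ContinuousAt F 0 := hFcont.continuousAt (hUo.mem_nhds (hDsub hx))
      have hmemD : D ∈ nhds (0:ℂ) := by rw [hD]; exact isOpen_ball.mem_nhds (by rwa [hD] at hx)
      have hfil : nhdsWithin (0:ℂ) (D \ {0}) = nhdsWithin (0:ℂ) {(0:ℂ)}ᶜ := by
        rw [Set.diff_eq]
        exact nhdsWithin_inter_of_mem (mem_nhdsWithin_of_mem_nhds hmemD)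
      have hne2 : (nhdsWithin (0:ℂ) (D \ {0})).NeBot := by
        rw [hfil]; exact Module.punctured_nhds_neBot ℝ ℂ 0
      apply eq_zero_of_limit hCA hne2
      intro y hy
      have hyz := hG0 y hy.1
      have : y ≠ 0 := hy.2
      have hy2 : y^2 ≠ 0 := pow_ne_zero 2 this
      exact (mul_eq_zero.mp hyz).resolve_left hy2
    · have hyz := hG0 x hx
      exact (mul_eq_zero.mp hyz).resolve_left (pow_ne_zero 2 hne)
  have hFzero : ∀ x ∈ Metric.closedBall (0:ℂ) 1, F x = 0 := by
    intro x hx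
    by_cases hxD : x ∈ D
    · exact hFD0 x hxD
    · have hCA : ContinuousAt F x := hFcont.continuousAt (hUo.mem_nhds (hDU hx))
      have hcl : x ∈ closure D := by rw [hclos]; exact hx
      have hne2 : (nhdsWithin x D).NeBot := mem_closure_iff_nhdsWithin_neBot.mp hcl
      exact eq_zero_of_limit hCA hne2 hFD0
  -- conclusion
  intro z hz
  have hform := hFform z
  rw [hFzero z hz] at hform
  have hri : (0:ℝ) = (inner ℝ (fderiv ℝ w z 1) (fderiv ℝ w z 1) : ℝ)
        - (inner ℝ (fderiv ℝ w z Complex.I) (fderiv ℝ w z Complex.I) : ℝ)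
      ∧ (0:ℝ) = -(2 * (inner ℝ (fderiv ℝ w z 1) (fderiv ℝ w z Complex.I) : ℝ)) := by
    have hr := congrArg Complex.re hform
    have hi := congrArg Complex.im hform
    simp only [Complex.zero_re, Complex.zero_im, Complex.sub_re, Complex.sub_im,
      Complex.mul_re, Complex.mul_im, Complex.ofReal_re, Complex.ofReal_im,
      Complex.I_re, Complex.I_im, Complex.re_ofNat, Complex.im_ofNat] at hr hi
    constructor <;> linarith
  constructor
  · have h1 : ‖fderiv ℝ w z 1‖^2 = ‖fderiv ℝ w z Complex.I‖^2 := by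
      rw [← real_inner_self_eq_norm_sq, ← real_inner_self_eq_norm_sq]
      linarith [hri.1]
    rw [← Real.sqrt_sq (norm_nonneg (fderiv ℝ w z 1)),
      ← Real.sqrt_sq (norm_nonneg (fderiv ℝ w z Complex.I)), h1]
  · linarith [hri.2]
end

section
/- Let ζ ∈ L^{2,∞}(ℝ) satisfy ζ = c|x|^{−1/2} * g with g ∈ L¹(ℝ) and suppose ‖g‖_{L¹(B(x,r))} ≤ M r^β for all x ∈ ℝ, r > 0, with 0 < β < 1/2. Then for almost every x, |ζ(x)| ≤ C (Mg(x))^{(1/2−β)/(1−β)} · M^{1/(2(1−β))} up to constants, where Mg is the Hardy–Littlewood maximal function; consequently ζ ∈ L^p_loc(ℝ) for every 2 < p < (1−β)/(1/2−β). -/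
open MeasureTheory

/-- The (uncentered-radius) Hardy–Littlewood maximal function of `g`, valued in `ℝ≥0∞`. -/
noncomputable def maxFn (g : ℝ → ℝ) (x : ℝ) : ENNReal :=
  ⨆ r ∈ Set.Ioi (0 : ℝ),
    (volume (Metric.ball x r))⁻¹ * ∫⁻ y in Metric.ball x r, ‖g y‖₊

section Aux
open Set Metric

lemma maxFn_weak (g : ℝ → ℝ) (hg : Integrable g) {l : ℝ} (hl : 0 < l) :
    volume {x : ℝ | ENNReal.ofReal l < maxFn g x} ≤
      (ENNReal.ofReal l)⁻¹ * (4 * ∫⁻ y, ‖g y‖₊) := by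
  set I : ENNReal := ∫⁻ y, (‖g y‖₊ : ENNReal) with hI
  have hItop : I ≠ ⊤ := hg.2.ne
  set E := {x : ℝ | ENNReal.ofReal l < maxFn g x} with hE
  have key : ∀ a ∈ E, ∃ r : ℝ, 0 < r ∧
      ENNReal.ofReal (l * (2*r)) < ∫⁻ y in Metric.ball a r, ‖g y‖₊ := by
    intro a ha
    have h : ENNReal.ofReal l < maxFn g a := ha
    rw [maxFn, lt_iSup_iff] at h
    obtain ⟨r, hr⟩ := h
    rw [lt_iSup_iff] at hr
    obtain ⟨hrpos, hr⟩ := hr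
    rw [Set.mem_Ioi] at hrpos
    refine ⟨r, hrpos, ?_⟩
    rw [Real.volume_ball] at hr
    have hne : ENNReal.ofReal (2*r) ≠ 0 := (ENNReal.ofReal_pos.mpr (by linarith)).ne'
    have h2 := (ENNReal.mul_lt_mul_iff_right hne ENNReal.ofReal_ne_top).mpr hr
    rw [← mul_assoc, ENNReal.mul_inv_cancel hne ENNReal.ofReal_ne_top, one_mul] at h2
    calc ENNReal.ofReal (l * (2*r)) = ENNReal.ofReal (2*r) * ENNReal.ofReal l := by
          rw [← ENNReal.ofReal_mul (by linarith), mul_comm]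
      _ < _ := h2
  classical
  set rf : ℝ → ℝ := fun a => if h : a ∈ E then (key a h).choose else 0 with hrf
  have hrf_pos : ∀ a ∈ E, 0 < rf a := by
    intro a ha; rw [hrf]; simp only [dif_pos ha]; exact (key a ha).choose_spec.1
  have hrf_lt : ∀ a ∈ E,
      ENNReal.ofReal (l * (2 * rf a)) < ∫⁻ y in Metric.ball a (rf a), ‖g y‖₊ := by
    intro a ha; rw [hrf]; simp only [dif_pos ha]; exact (key a ha).choose_spec.2
  have hrf_bdd : ∀ a ∈ E, rf a ≤ I.toReal / (2*l) := by
    intro a ha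
    have h1 := (hrf_lt a ha).le
    have h2 : (∫⁻ y in Metric.ball a (rf a), (‖g y‖₊ : ENNReal)) ≤ I := by
      rw [hI]; exact lintegral_mono' Measure.restrict_le_self le_rfl
    have h3 : ENNReal.ofReal (l * (2 * rf a)) ≤ I := h1.trans h2
    rw [ENNReal.ofReal_le_iff_le_toReal hItop] at h3
    rw [le_div_iff₀ (by positivity)]
    nlinarith [hrf_pos a ha]
  obtain ⟨u, hu_sub, hu_disj, hu_cov⟩ :=
    Vitali.exists_disjoint_subfamily_covering_enlargement_closedBall E id rf
      (I.toReal / (2*l)) hrf_bdd 4 (by norm_num)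
  have hdisj' : ∀ b ∈ u, ∀ c ∈ u, b ≠ c →
      Disjoint (Metric.ball b (rf b)) (Metric.ball c (rf c)) := by
    intro b hb c hc hbc
    exact (hu_disj hb hc hbc).mono Metric.ball_subset_closedBall Metric.ball_subset_closedBall
  have hucnt : u.Countable := by
    have hpair : Pairwise (Function.onFun Disjoint fun b : u => Metric.ball (b:ℝ) (rf b)) := by
      intro i j hij
      exact hdisj' i i.2 j j.2 (fun h => hij (Subtype.ext h))
    have hcnt1 := MeasureTheory.Measure.countable_meas_pos_of_disjoint_iUnion
      (μ := volume) (fun b : u => measurableSet_ball) hpair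
    have huniv : {i : u | 0 < volume (Metric.ball (i:ℝ) (rf i))} = Set.univ :=
      Set.eq_univ_of_forall fun b => Metric.measure_ball_pos volume _ (hrf_pos b (hu_sub b.2))
    rw [huniv] at hcnt1
    exact Set.countable_coe_iff.mp (Set.countable_univ_iff.mp hcnt1)
  set μ := volume.withDensity fun y => (‖g y‖₊ : ENNReal) with hμ
  have hμball : ∀ a r, μ (Metric.ball a r) = ∫⁻ y in Metric.ball a r, ‖g y‖₊ :=
    fun a r => withDensity_apply _ measurableSet_ball
  have hcover : E ⊆ ⋃ b ∈ u, Metric.closedBall b (4 * rf b) := by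
    intro a ha
    obtain ⟨b, hb, hsub⟩ := hu_cov a ha
    exact Set.mem_biUnion hb (hsub (Metric.mem_closedBall_self (hrf_pos a ha).le))
  calc volume E ≤ volume (⋃ b ∈ u, Metric.closedBall b (4 * rf b)) := measure_mono hcover
    _ ≤ ∑' b : u, volume (Metric.closedBall (b:ℝ) (4 * rf b)) :=
        measure_biUnion_le volume hucnt _
    _ ≤ ∑' b : u, (ENNReal.ofReal l)⁻¹ * (4 * μ (Metric.ball (b:ℝ) (rf b))) := by
        apply ENNReal.tsum_le_tsum
        intro b
        rw [Real.volume_closedBall]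
        have hb := hu_sub b.2
        have heq : ENNReal.ofReal (2*(4*rf (b:ℝ))) =
            (ENNReal.ofReal l)⁻¹ * (4 * ENNReal.ofReal (l * (2 * rf (b:ℝ)))) := by
          have h4 : (4 : ENNReal) * ENNReal.ofReal (l * (2 * rf (b:ℝ))) =
              ENNReal.ofReal l * ENNReal.ofReal (2*(4*rf (b:ℝ))) := by
            rw [← ENNReal.ofReal_ofNat 4, ← ENNReal.ofReal_mul (by norm_num),
              ← ENNReal.ofReal_mul hl.le]
            congr 1; ring
          rw [h4, ← mul_assoc ((ENNReal.ofReal l)⁻¹) (ENNReal.ofReal l) _,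
            ENNReal.inv_mul_cancel
            (ENNReal.ofReal_pos.mpr hl).ne' ENNReal.ofReal_ne_top, one_mul]
        rw [heq, hμball]
        exact mul_le_mul_right (mul_le_mul_right (hrf_lt _ hb).le _) _
    _ = (ENNReal.ofReal l)⁻¹ * (4 * ∑' b : u, μ (Metric.ball (b:ℝ) (rf b))) := by
        rw [ENNReal.tsum_mul_left, ENNReal.tsum_mul_left]
    _ ≤ (ENNReal.ofReal l)⁻¹ * (4 * I) := by
        apply mul_le_mul_right
        apply mul_le_mul_right
        have := measure_biUnion (μ := μ) hucnt
          (fun b hb c hc hbc => hdisj' b hb c hc hbc) (fun b _ => measurableSet_ball)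
        rw [← this]
        calc μ (⋃ b ∈ u, Metric.ball b (rf b)) ≤ μ Set.univ := measure_mono (Set.subset_univ _)
          _ = I := by rw [hμ, withDensity_apply _ MeasurableSet.univ, Measure.restrict_univ]

lemma lintegral_ball_le_maxFn (g : ℝ → ℝ) (x r : ℝ) (hr : 0 < r) :
    ∫⁻ y in Metric.ball x r, ‖g y‖₊ ≤ ENNReal.ofReal (2*r) * maxFn g x := by
  have hvol : volume (Metric.ball x r) = ENNReal.ofReal (2*r) := Real.volume_ball x r
  have h1 : (volume (Metric.ball x r))⁻¹ * ∫⁻ y in Metric.ball x r, ‖g y‖₊ ≤ maxFn g x := by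
    apply le_biSup _ (Set.mem_Ioi.mpr hr)
  rw [hvol] at h1
  have hne : ENNReal.ofReal (2*r) ≠ 0 := (ENNReal.ofReal_pos.mpr (by linarith)).ne'
  calc ∫⁻ y in Metric.ball x r, (‖g y‖₊ : ENNReal)
      = ENNReal.ofReal (2*r) * ((ENNReal.ofReal (2*r))⁻¹ * ∫⁻ y in Metric.ball x r, ‖g y‖₊) := by
        rw [← mul_assoc, ENNReal.mul_inv_cancel hne ENNReal.ofReal_ne_top, one_mul]
    _ ≤ ENNReal.ofReal (2*r) * maxFn g x := mul_le_mul_right h1 _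

lemma pointwise_bound (β M cst : ℝ) (hβ0 : 0 < β) (hβ : β < 1/2) (hM : 0 < M)
    (g : ℝ → ℝ) (hg : Integrable g)
    (hMor : ∀ x r : ℝ, 0 < r → ∫ y in Metric.ball x r, |g y| ≤ M * r ^ β)
    (x : ℝ) :
    ENNReal.ofReal |cst * ∫ y : ℝ, |x - y| ^ (-(1 / 2) : ℝ) * g y| ≤
      ENNReal.ofReal (|cst| * (1/(1-2*β)+2) + 1) * (maxFn g x) ^ (((1:ℝ)/2 - β)/(1-β)) *
        ENNReal.ofReal (M ^ ((1:ℝ)/(2*(1-β)))) := by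
  have h1β : (0:ℝ) < 1 - β := by linarith
  have h12β : (0:ℝ) < 1 - 2*β := by linarith
  set θ : ℝ := ((1:ℝ)/2 - β)/(1-β) with hθdef
  set e : ℝ := (1:ℝ)/(2*(1-β)) with hedef
  have hθ : 0 < θ := div_pos (by linarith) h1β
  have he : 0 < e := by positivity
  set C₀ : ℝ := 1/(1-2*β)+2 with hC₀def
  have hC₀ : 0 < C₀ := by positivity
  set C : ℝ := |cst| * C₀ + 1 with hCdef
  have hC : 0 < C := by positivity
  have hMe : 0 < M ^ e := Real.rpow_pos_of_pos hM e
  set μ := volume.withDensity fun y => (‖g y‖₊ : ENNReal) with hμdef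
  set k : ℝ → ℝ := fun y => |x - y| ^ (-(1/2) : ℝ) with hkdef
  have hk_meas : Measurable k := ((measurable_const.sub measurable_id).abs).pow_const _
  have hk_nonneg : ∀ y, 0 ≤ k y := fun y => Real.rpow_nonneg (abs_nonneg _) _
  -- Step 1 : reduce to a layer-cake integral
  have step1 : ENNReal.ofReal |cst * ∫ y : ℝ, k y * g y| ≤
      ENNReal.ofReal |cst| * ∫⁻ t in Set.Ioi (0:ℝ), μ {y | t < k y} := by
    rw [abs_mul, ENNReal.ofReal_mul (abs_nonneg _)]
    apply mul_le_mul_right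
    calc ENNReal.ofReal |∫ y : ℝ, k y * g y|
        = (‖∫ y : ℝ, k y * g y‖₊ : ENNReal) := (Real.enorm_eq_ofReal_abs _).symm
      _ ≤ ∫⁻ y, (‖k y * g y‖₊ : ENNReal) := enorm_integral_le_lintegral_enorm _
      _ = ∫⁻ y, ENNReal.ofReal (k y) * ‖g y‖₊ := by
          apply lintegral_congr; intro y
          rw [nnnorm_mul, ENNReal.coe_mul]
          exact congrArg (· * _) (Real.enorm_eq_ofReal (hk_nonneg y))
      _ = ∫⁻ y, ENNReal.ofReal (k y) ∂μ := by
          rw [hμdef, lintegral_withDensity_eq_lintegral_mul₀ hg.aemeasurable.nnnorm.coe_nnreal_ennreal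
            (hk_meas.ennreal_ofReal.aemeasurable)]
          apply lintegral_congr; intro y
          simp [mul_comm]
      _ = ∫⁻ t in Set.Ioi (0:ℝ), μ {y | t < k y} :=
          lintegral_eq_lintegral_meas_lt μ (Filter.Eventually.of_forall hk_nonneg)
            hk_meas.aemeasurable
  -- subset of balls
  have hsubset : ∀ t : ℝ, 0 < t → {y | t < k y} ⊆ Metric.ball x (t ^ (-2:ℝ)) := by
    intro t ht y hy
    simp only [Set.mem_setOf_eq, hkdef] at hy
    have hxy : 0 < |x - y| := by
      rcases eq_or_lt_of_le (abs_nonneg (x - y)) with h | h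
      · exfalso
        rw [← h, Real.zero_rpow (by norm_num : (-(1/2):ℝ) ≠ 0)] at hy
        linarith
      · exact h
    have h2 : (|x - y| ^ (-(1/2):ℝ)) ^ (-2:ℝ) < t ^ (-2:ℝ) :=
      Real.rpow_lt_rpow_of_neg ht hy (by norm_num)
    rw [← Real.rpow_mul (abs_nonneg _)] at h2
    norm_num at h2
    rw [Metric.mem_ball, Real.dist_eq, abs_sub_comm]
    rwa [Real.rpow_neg ht.le, Real.rpow_two]
  -- ball measure bounds
  have bndM : ∀ s : ℝ, 0 < s → μ (Metric.ball x s) ≤ ENNReal.ofReal (M * s ^ β) := by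
    intro s hs
    rw [hμdef, withDensity_apply _ measurableSet_ball]
    have : ∫⁻ y in Metric.ball x s, (‖g y‖₊ : ENNReal)
        = ENNReal.ofReal (∫ y in Metric.ball x s, |g y|) := by
      rw [ofReal_integral_eq_lintegral_ofReal (hg.abs.integrableOn)
        (Filter.Eventually.of_forall fun y => abs_nonneg _)]
      apply lintegral_congr; intro y
      exact Real.enorm_eq_ofReal_abs _
    rw [this]
    exact ENNReal.ofReal_le_ofReal (hMor x s hs)
  have bndK : ∀ s : ℝ, 0 < s → μ (Metric.ball x s) ≤ ENNReal.ofReal (2*s) * maxFn g x := by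
    intro s hs
    rw [hμdef, withDensity_apply _ measurableSet_ball]
    exact lintegral_ball_le_maxFn g x s hs
  -- exponent relations
  have hθe : θ = 1 - e := by rw [hθdef, hedef]; field_simp; ring
  have he2 : e * (1-2*β) = θ := by rw [hθdef, hedef]; field_simp; try ring
  -- case : maxFn = 0
  rcases eq_or_ne (maxFn g x) 0 with hK0 | hKne0
  · have hμz : ∀ S : Set ℝ, μ S = 0 := by
      have hμ0 : μ Set.univ = 0 := by
        have hU : (Set.univ : Set ℝ) = ⋃ n : ℕ, Metric.ball x (n+1) :=
          (Metric.iUnion_ball_nat_succ x).symm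
        rw [hU]
        refine le_antisymm (le_trans (measure_iUnion_le _) ?_) zero_le
        have hz : ∀ n : ℕ, μ (Metric.ball x ((n:ℝ)+1)) = 0 := by
          intro n
          refine le_antisymm ?_ zero_le
          calc μ (Metric.ball x ((n:ℝ)+1)) ≤ ENNReal.ofReal (2*((n:ℝ)+1)) * maxFn g x :=
                bndK _ (by positivity)
            _ = 0 := by rw [hK0, mul_zero]
        simp [hz]
      exact fun S => le_antisymm ((measure_mono (Set.subset_univ S)).trans hμ0.le) zero_le
    have hz : ∫⁻ t in Set.Ioi (0:ℝ), μ {y | t < k y} = 0 := by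
      have : ∀ t : ℝ, μ {y | t < k y} = 0 := fun t => hμz _
      simp [this]
    calc ENNReal.ofReal |cst * ∫ y : ℝ, k y * g y| ≤ _ := step1
      _ = 0 := by rw [hz, mul_zero]
      _ ≤ _ := zero_le
  rcases eq_or_ne (maxFn g x) ⊤ with hKtop | hKtop
  · -- top case : RHS is infinite
    have : ENNReal.ofReal C * (maxFn g x) ^ θ * ENNReal.ofReal (M ^ e) = ⊤ := by
      rw [hKtop, ENNReal.top_rpow_of_pos hθ, ENNReal.mul_top (ENNReal.ofReal_pos.mpr hC).ne',
        ENNReal.top_mul (ENNReal.ofReal_pos.mpr hMe).ne']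
    exact le_of_le_of_eq le_top this.symm
  -- main case : 0 < maxFn < ∞
  set k0 : ℝ := (maxFn g x).toReal with hk0def
  have hk0pos : 0 < k0 := ENNReal.toReal_pos hKne0 hKtop
  have hKeq : maxFn g x = ENNReal.ofReal k0 := (ENNReal.ofReal_toReal hKtop).symm
  have hkM : 0 < k0 / M := div_pos hk0pos hM
  set t₀ : ℝ := (k0/M) ^ e with ht₀def
  have ht₀ : 0 < t₀ := Real.rpow_pos_of_pos hkM e
  have hsplit : ∫⁻ t in Set.Ioi (0:ℝ), μ {y | t < k y}
      = (∫⁻ t in Set.Ioc 0 t₀, μ {y | t < k y}) + ∫⁻ t in Set.Ioi t₀, μ {y | t < k y} := by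
    rw [← Set.Ioc_union_Ioi_eq_Ioi ht₀.le,
      lintegral_union measurableSet_Ioi (Set.Ioc_disjoint_Ioi le_rfl)]
  have hA : ∫⁻ t in Set.Ioc 0 t₀, μ {y | t < k y}
      ≤ ENNReal.ofReal (M * t₀ ^ (1-2*β) / (1-2*β)) := by
    have hb : ∀ t ∈ Set.Ioc (0:ℝ) t₀, μ {y | t < k y} ≤ ENNReal.ofReal (M * t ^ (-(2*β))) := by
      intro t ht
      have ht0 : 0 < t := ht.1
      calc μ {y | t < k y} ≤ μ (Metric.ball x (t ^ (-2:ℝ))) := measure_mono (hsubset t ht0)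
        _ ≤ ENNReal.ofReal (M * (t ^ (-2:ℝ)) ^ β) := bndM _ (Real.rpow_pos_of_pos ht0 _)
        _ = ENNReal.ofReal (M * t ^ (-(2*β))) := by
            rw [← Real.rpow_mul ht0.le]
            norm_num
    have hint : IntegrableOn (fun t : ℝ => M * t ^ (-(2*β))) (Set.Ioc 0 t₀) volume := by
      have h1 : IntervalIntegrable (fun t : ℝ => t ^ (-(2*β))) volume 0 t₀ :=
        intervalIntegral.intervalIntegrable_rpow' (by linarith)
      exact h1.1.const_mul M
    have hnn : 0 ≤ᵐ[volume.restrict (Set.Ioc 0 t₀)] fun t : ℝ => M * t ^ (-(2*β)) := by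
      filter_upwards [ae_restrict_mem measurableSet_Ioc] with t ht
      have := ht.1
      positivity
    calc ∫⁻ t in Set.Ioc 0 t₀, μ {y | t < k y}
        ≤ ∫⁻ t in Set.Ioc 0 t₀, ENNReal.ofReal (M * t ^ (-(2*β))) :=
          setLIntegral_mono ((measurable_const.mul (measurable_id.pow_const _)).ennreal_ofReal) hb
      _ = ENNReal.ofReal (∫ t in Set.Ioc 0 t₀, M * t ^ (-(2*β))) :=
          (ofReal_integral_eq_lintegral_ofReal hint hnn).symm
      _ = ENNReal.ofReal (M * t₀ ^ (1-2*β) / (1-2*β)) := by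
          congr 1
          rw [← intervalIntegral.integral_of_le ht₀.le, intervalIntegral.integral_const_mul,
            integral_rpow (Or.inl (by linarith : (-1:ℝ) < -(2*β)))]
          rw [Real.zero_rpow (by linarith : -(2*β)+1 ≠ 0)]
          rw [show -(2*β)+1 = 1-2*β by ring]
          ring
  have hB : ∫⁻ t in Set.Ioi t₀, μ {y | t < k y}
      ≤ ENNReal.ofReal (2/t₀) * maxFn g x := by
    have hb : ∀ t ∈ Set.Ioi t₀, μ {y | t < k y}
        ≤ ENNReal.ofReal (2 * t ^ (-2:ℝ)) * maxFn g x := by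
      intro t ht
      have ht0 : 0 < t := ht₀.trans ht
      exact (measure_mono (hsubset t ht0)).trans (bndK _ (Real.rpow_pos_of_pos ht0 _))
    have hint : IntegrableOn (fun t : ℝ => 2 * t ^ (-2:ℝ)) (Set.Ioi t₀) volume :=
      (integrableOn_Ioi_rpow_of_lt (by norm_num) ht₀).const_mul 2
    have hnn : 0 ≤ᵐ[volume.restrict (Set.Ioi t₀)] fun t : ℝ => 2 * t ^ (-2:ℝ) := by
      filter_upwards [ae_restrict_mem measurableSet_Ioi] with t ht
      have := ht₀.trans ht
      positivity
    calc ∫⁻ t in Set.Ioi t₀, μ {y | t < k y}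
        ≤ ∫⁻ t in Set.Ioi t₀, ENNReal.ofReal (2 * t ^ (-2:ℝ)) * maxFn g x :=
          setLIntegral_mono
            (((measurable_const.mul (measurable_id.pow_const _)).ennreal_ofReal).mul_const _) hb
      _ = (∫⁻ t in Set.Ioi t₀, ENNReal.ofReal (2 * t ^ (-2:ℝ))) * maxFn g x :=
          lintegral_mul_const _ ((measurable_const.mul (measurable_id.pow_const _)).ennreal_ofReal)
      _ = ENNReal.ofReal (2/t₀) * maxFn g x := by
          congr 1
          rw [← ofReal_integral_eq_lintegral_ofReal hint hnn]
          congr 1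
          rw [MeasureTheory.integral_const_mul, integral_Ioi_rpow_of_lt (by norm_num) ht₀]
          rw [show (-2:ℝ)+1 = -1 by ring, Real.rpow_neg_one]
          field_simp
  -- the real computation
  have ht2 : t₀ = k0^e / M^e := by rw [ht₀def, Real.div_rpow hk0pos.le hM.le]
  have ht1 : t₀ ^ (1-2*β) = k0^θ / M^θ := by
    rw [ht₀def, ← Real.rpow_mul hkM.le, he2, Real.div_rpow hk0pos.le hM.le]
  have e1 : M * (k0^θ / M^θ) = k0^θ * M^e := by
    have hMsub : M ^ ((1:ℝ)-θ) = M / M^θ := by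
      rw [Real.rpow_sub hM, Real.rpow_one]
    have h1θ : (1:ℝ) - θ = e := by linarith [hθe]
    calc M * (k0^θ / M^θ) = k0^θ * (M / M^θ) := by ring
      _ = k0^θ * M^e := by rw [← hMsub, h1θ]
  have e2 : 2/t₀*k0 = 2*(k0^θ * M^e) := by
    have hksub : k0 ^ ((1:ℝ)-e) = k0 / k0^e := by
      rw [Real.rpow_sub hk0pos, Real.rpow_one]
    have hMe0 : M^e ≠ 0 := hMe.ne'
    have hke0 : k0^e ≠ 0 := (Real.rpow_pos_of_pos hk0pos e).ne'
    rw [ht2]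
    calc 2/(k0^e/M^e)*k0 = 2*M^e*(k0/k0^e) := by field_simp; try ring
      _ = 2*M^e*(k0 ^ ((1:ℝ)-e)) := by rw [hksub]
      _ = 2*(k0^θ * M^e) := by rw [← hθe]; ring
  have hreal : M * t₀ ^ (1-2*β) / (1-2*β) + 2/t₀*k0 = C₀ * (k0^θ * M^e) := by
    rw [ht1, show M * (k0^θ/M^θ) / (1-2*β) = (M * (k0^θ/M^θ)) * (1/(1-2*β)) by ring,
      e1, e2, hC₀def]
    ring
  calc ENNReal.ofReal |cst * ∫ y : ℝ, k y * g y|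
      ≤ ENNReal.ofReal |cst| * ∫⁻ t in Set.Ioi (0:ℝ), μ {y | t < k y} := step1
    _ = ENNReal.ofReal |cst| * ((∫⁻ t in Set.Ioc 0 t₀, μ {y | t < k y})
          + ∫⁻ t in Set.Ioi t₀, μ {y | t < k y}) := by rw [hsplit]
    _ ≤ ENNReal.ofReal |cst| * (ENNReal.ofReal (M * t₀ ^ (1-2*β)/(1-2*β))
          + ENNReal.ofReal (2/t₀) * maxFn g x) := mul_le_mul_right (add_le_add hA hB) _
    _ = ENNReal.ofReal |cst| * ENNReal.ofReal (C₀ * (k0^θ * M^e)) := by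
        rw [hKeq, ← ENNReal.ofReal_mul (by positivity : (0:ℝ) ≤ 2/t₀),
          ← ENNReal.ofReal_add (by positivity) (by positivity), hreal]
    _ = ENNReal.ofReal (|cst| * C₀) * (ENNReal.ofReal (k0^θ) * ENNReal.ofReal (M^e)) := by
        rw [← ENNReal.ofReal_mul (abs_nonneg cst), ← ENNReal.ofReal_mul (by positivity),
          ← ENNReal.ofReal_mul (by positivity)]
        congr 1
        ring
    _ ≤ ENNReal.ofReal C * ((maxFn g x) ^ θ * ENNReal.ofReal (M^e)) := by
        rw [hKeq, ENNReal.ofReal_rpow_of_pos hk0pos]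
        exact mul_le_mul_left (ENNReal.ofReal_le_ofReal (by rw [hCdef]; linarith)) _
    _ = ENNReal.ofReal C * (maxFn g x) ^ θ * ENNReal.ofReal (M^e) := by rw [mul_assoc]

end Aux

/-- Adams-type improvement: if `ζ = c |x|^{-1/2} * g` with `g ∈ L¹(ℝ)`, `ζ` in weak `L²`,
and `‖g‖_{L¹(B(x,r))} ≤ M r^β` for all balls (`0 < β < 1/2`), then a.e.
`|ζ(x)| ≲ (Mg(x))^{(1/2−β)/(1−β)} M^{1/(2(1−β))}`, and consequently
`ζ ∈ L^p_loc(ℝ)` for every `2 < p < (1−β)/(1/2−β)`. -/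
theorem stmt16 (β M cst : ℝ) (hβ0 : 0 < β) (hβ : β < 1 / 2) (hM : 0 < M)
    (g : ℝ → ℝ) (hg : Integrable g) (ζ : ℝ → ℝ) (hζmeas : Measurable ζ)
    (hζ : ∀ᵐ x : ℝ, ζ x = cst * ∫ y : ℝ, |x - y| ^ (-(1 / 2) : ℝ) * g y)
    (hweak : ∃ A : ℝ, ∀ s : ℝ, 0 < s →
      s * (volume {x : ℝ | s < |ζ x|}).toReal ^ ((1 : ℝ) / 2) ≤ A) :
    (∀ x r : ℝ, 0 < r → ∫ y in Metric.ball x r, |g y| ≤ M * r ^ β) →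
    ∃ C : ℝ, 0 < C ∧
      (∀ᵐ x : ℝ, ENNReal.ofReal |ζ x| ≤
        ENNReal.ofReal C * (maxFn g x) ^ (((1 : ℝ) / 2 - β) / (1 - β)) *
          ENNReal.ofReal (M ^ ((1 : ℝ) / (2 * (1 - β))))) ∧
      ∀ p : ℝ, 2 < p → p < (1 - β) / (1 / 2 - β) → ∀ R : ℝ, 0 < R →
        MemLp ζ (ENNReal.ofReal p) (volume.restrict (Metric.ball (0 : ℝ) R)) := by
  intro hMor
  have h12β : (0:ℝ) < 1 - 2*β := by linarith
  have h1β : (0:ℝ) < 1 - β := by linarith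
  have h12 : (0:ℝ) < 1/2 - β := by linarith
  have hC : 0 < |cst| * (1/(1-2*β)+2) + 1 := by
    have h1 : (0:ℝ) < 1/(1-2*β) := by positivity
    have h2 : (0:ℝ) ≤ |cst| * (1/(1-2*β)+2) := mul_nonneg (abs_nonneg _) (by linarith)
    linarith
  have hptw : ∀ᵐ x : ℝ, ENNReal.ofReal |ζ x| ≤
      ENNReal.ofReal (|cst| * (1/(1-2*β)+2) + 1) *
        (maxFn g x) ^ (((1 : ℝ) / 2 - β) / (1 - β)) *
        ENNReal.ofReal (M ^ ((1 : ℝ) / (2 * (1 - β)))) := by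
    filter_upwards [hζ] with x hx
    rw [hx]
    exact pointwise_bound β M cst hβ0 hβ hM g hg hMor x
  refine ⟨|cst| * (1/(1-2*β)+2) + 1, hC, hptw, ?_⟩
  intro p hp2 hpq R hR
  have hp0 : (0:ℝ) < p := by linarith
  set θ : ℝ := ((1:ℝ)/2 - β)/(1-β) with hθdef
  set q : ℝ := (1-β)/((1:ℝ)/2-β) with hqdef
  have hθpos : 0 < θ := div_pos h12 h1β
  have hqpos : 0 < q := div_pos h1β h12
  have hθq : θ * q = 1 := by rw [hθdef, hqdef]; field_simp
  have hqp : p < q := hpq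
  have hMe : 0 < M ^ ((1:ℝ)/(2*(1-β))) := Real.rpow_pos_of_pos hM _
  set D' : ℝ := (|cst| * (1/(1-2*β)+2) + 1) * M ^ ((1:ℝ)/(2*(1-β))) with hD'def
  have hD' : 0 < D' := mul_pos hC hMe
  have hI : (∫⁻ y, (‖g y‖₊ : ENNReal)) ≠ ⊤ := hg.2.ne
  have hae2 : ∀ᵐ x : ℝ, ENNReal.ofReal |ζ x| ≤ ENNReal.ofReal D' * (maxFn g x) ^ θ := by
    filter_upwards [hptw] with x hx
    refine hx.trans_eq ?_
    rw [hD'def, ENNReal.ofReal_mul hC.le, mul_right_comm]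
  have hdist : ∀ s : ℝ, 0 < s → volume {x : ℝ | s < |ζ x|} ≤
      (ENNReal.ofReal ((s/D')^q))⁻¹ * (4 * ∫⁻ y, ‖g y‖₊) := by
    intro s hs
    have hsub : {x : ℝ | s < |ζ x|} ≤ᵐ[volume]
        {x : ℝ | ENNReal.ofReal ((s/D')^q) < maxFn g x} := by
      filter_upwards [hae2] with x hx hxs
      have hzx : s < |ζ x| := hxs
      have h1 : ENNReal.ofReal s < ENNReal.ofReal D' * (maxFn g x) ^ θ :=
        lt_of_lt_of_le ((ENNReal.ofReal_lt_ofReal_iff (hs.trans hzx)).mpr hzx) hx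
      have h2 : ENNReal.ofReal (s/D') < (maxFn g x) ^ θ := by
        rw [ENNReal.ofReal_div_of_pos hD', ENNReal.div_lt_iff
          (Or.inl (ENNReal.ofReal_pos.mpr hD').ne') (Or.inl ENNReal.ofReal_ne_top)]
        rw [mul_comm]
        exact h1
      have h3 := ENNReal.rpow_lt_rpow h2 hqpos
      rw [← ENNReal.rpow_mul, hθq, ENNReal.rpow_one] at h3
      rw [ENNReal.ofReal_rpow_of_pos (div_pos hs hD')] at h3
      exact h3
    exact (measure_mono_ae hsub).trans
      (maxFn_weak g hg (Real.rpow_pos_of_pos (div_pos hs hD') q))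
  refine ⟨hζmeas.aestronglyMeasurable, ?_⟩
  have hpne : (ENNReal.ofReal p) ≠ 0 := (ENNReal.ofReal_pos.mpr hp0).ne'
  rw [eLpNorm_eq_lintegral_rpow_enorm_toReal hpne ENNReal.ofReal_ne_top]
  refine ENNReal.rpow_lt_top_of_nonneg (by positivity) ?_
  simp_rw [ENNReal.toReal_ofReal hp0.le]
  set ν := volume.restrict (Metric.ball (0:ℝ) R) with hνdef
  have hν_le : ∀ S : Set ℝ, ν S ≤ volume S :=
    fun S => Measure.le_iff'.mp Measure.restrict_le_self S
  have hconv : ∫⁻ x, ‖ζ x‖ₑ ^ p ∂ν = ∫⁻ x, ENNReal.ofReal (|ζ x| ^ p) ∂ν := by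
    apply lintegral_congr; intro x
    rw [Real.enorm_eq_ofReal_abs, ENNReal.ofReal_rpow_of_nonneg (abs_nonneg _) hp0.le]
  rw [hconv]
  rw [lintegral_eq_lintegral_meas_lt ν
    (Filter.Eventually.of_forall fun x => by positivity)
    (((hζmeas.abs).pow_const p).aemeasurable)]
  rw [← Set.Ioc_union_Ioi_eq_Ioi (zero_le_one), lintegral_union measurableSet_Ioi
    (Set.Ioc_disjoint_Ioi le_rfl), ← lt_top_iff_ne_top]
  refine ENNReal.add_lt_top.mpr ⟨?_, ?_⟩
  · calc ∫⁻ t in Set.Ioc (0:ℝ) 1, ν {x | t < |ζ x| ^ p}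
        ≤ ∫⁻ _t in Set.Ioc (0:ℝ) 1, ENNReal.ofReal (2*R) := by
          apply setLIntegral_mono measurable_const
          intro t _ht
          calc ν {x | t < |ζ x| ^ p} ≤ ν Set.univ := measure_mono (Set.subset_univ _)
            _ = ENNReal.ofReal (2*R) := by
                rw [hνdef, Measure.restrict_apply_univ, Real.volume_ball]
      _ = ENNReal.ofReal (2*R) * volume (Set.Ioc (0:ℝ) 1) := setLIntegral_const _ _
      _ < ⊤ := by
          rw [Real.volume_Ioc]
          exact ENNReal.mul_lt_top ENNReal.ofReal_lt_top ENNReal.ofReal_lt_top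
  · have hqp1 : 1 < q/p := (one_lt_div hp0).mpr hqp
    have hexp : -(q/p) < -1 := by linarith
    have key : ∀ t ∈ Set.Ioi (1:ℝ), ν {x | t < |ζ x| ^ p} ≤
        ENNReal.ofReal (D'^q * t ^ (-(q/p))) * (4 * ∫⁻ y, ‖g y‖₊) := by
      intro t ht
      have ht1 : (1:ℝ) < t := ht
      have ht0 : (0:ℝ) < t := by linarith
      have htp : 0 < t ^ ((1:ℝ)/p) := Real.rpow_pos_of_pos ht0 _
      have hsub3 : {x : ℝ | t < |ζ x| ^ p} ⊆ {x : ℝ | t ^ ((1:ℝ)/p) < |ζ x|} := by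
        intro x hx
        have hx' : t < |ζ x| ^ p := hx
        have h5 := Real.rpow_lt_rpow ht0.le hx' (by positivity : (0:ℝ) < 1/p)
        rwa [← Real.rpow_mul (abs_nonneg _), mul_one_div, div_self hp0.ne',
          Real.rpow_one] at h5
      calc ν {x | t < |ζ x| ^ p} ≤ volume {x : ℝ | t ^ ((1:ℝ)/p) < |ζ x|} :=
            (hν_le _).trans (measure_mono hsub3)
        _ ≤ (ENNReal.ofReal ((t ^ ((1:ℝ)/p)/D')^q))⁻¹ * (4 * ∫⁻ y, ‖g y‖₊) := hdist _ htp
        _ = ENNReal.ofReal (D'^q * t ^ (-(q/p))) * (4 * ∫⁻ y, ‖g y‖₊) := by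
            congr 1
            rw [← ENNReal.ofReal_inv_of_pos (Real.rpow_pos_of_pos (div_pos htp hD') q)]
            congr 1
            rw [Real.div_rpow htp.le hD'.le, ← Real.rpow_mul ht0.le, inv_div,
              show (1:ℝ)/p*q = q/p by ring, div_eq_mul_inv, ← Real.rpow_neg ht0.le]
    calc ∫⁻ t in Set.Ioi (1:ℝ), ν {x | t < |ζ x| ^ p}
        ≤ ∫⁻ t in Set.Ioi (1:ℝ),
            ENNReal.ofReal (D'^q * t ^ (-(q/p))) * (4 * ∫⁻ y, ‖g y‖₊) :=
          setLIntegral_mono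
            (((measurable_const.mul (measurable_id.pow_const _)).ennreal_ofReal).mul_const _) key
      _ = (∫⁻ t in Set.Ioi (1:ℝ), ENNReal.ofReal (D'^q * t ^ (-(q/p)))) *
            (4 * ∫⁻ y, ‖g y‖₊) :=
          lintegral_mul_const _
            ((measurable_const.mul (measurable_id.pow_const _)).ennreal_ofReal)
      _ < ⊤ := by
          apply ENNReal.mul_lt_top
          · have hint : IntegrableOn (fun t : ℝ => D'^q * t ^ (-(q/p)))
                (Set.Ioi (1:ℝ)) volume :=
              (integrableOn_Ioi_rpow_of_lt hexp one_pos).const_mul _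
            have hnn : 0 ≤ᵐ[volume.restrict (Set.Ioi (1:ℝ))]
                fun t : ℝ => D'^q * t ^ (-(q/p)) := by
              filter_upwards [ae_restrict_mem measurableSet_Ioi] with t ht
              have h01 : (0:ℝ) < t := lt_trans one_pos ht
              positivity
            rw [← ofReal_integral_eq_lintegral_ofReal hint hnn]
            exact ENNReal.ofReal_lt_top
          · exact ENNReal.mul_lt_top (by norm_num) hI.lt_top
end
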